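/- arXiv:1403.6431 — 7 statements merged into one kernel-verified Lean document; each statement's English description precedes it below -/
import Mathlib

section
/- Let X and Y be Banach spaces over 𝕜 (𝕜 = ℝ or ℂ), and suppose Y has property (β) witnessed by a family {(y_α, g_α) : α ∈ Λ} ⊂ Y × Y' and a constant 0 ≤ λ < 1. Let N ≥ 1, let 0 < ε ≤ 1, let Q : X → Y be a continuous N-homogeneous polynomial with ‖Q‖ = 1, let α₀ ∈ Λ be such that ‖g_{α₀}∘Q‖ ≥ 1 − ε(1−λ)/4, and let p : X → 𝕜 be a continuous N-homogeneous polynomial with ‖p‖ = ‖g_{α₀}∘Q‖ and ‖g_{α₀}∘Q − p‖ < ε(1−λ)/2. Define P(x) = Q(x) + ((1+ε)p(x) − g_{α₀}(Q(x)))·y_{α₀}. Then P is a continuous N-homogeneous polynomial with ‖Q − P‖ ≤ 2ε and ‖P‖ = ‖g_{α₀}∘P‖ = (1+ε)‖p‖; moreover, if p attains its norm at some x₀ with ‖x₀‖ ≤ 1, then ‖P(x₀)‖ = ‖P‖, i.e. P attains its norm at x₀. -/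
open Metric Filter

noncomputable def supOnBall {X W : Type*} [NormedAddCommGroup X] [NormedAddCommGroup W]
    (s : ℝ) (f : X → W) : ℝ :=
  sSup ((fun x => ‖f x‖) '' Metric.closedBall (0 : X) s)

def IsHomogPoly (𝕜 : Type*) [NontriviallyNormedField 𝕜] {X Y : Type*}
    [NormedAddCommGroup X] [NormedSpace 𝕜 X] [NormedAddCommGroup Y] [NormedSpace 𝕜 Y]
    (N : ℕ) (P : X → Y) : Prop :=
  ∃ M : ContinuousMultilinearMap 𝕜 (fun _ : Fin N => X) Y, ∀ x, P x = M (fun _ => x)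

def IsPolyDegLE (𝕜 : Type*) [NontriviallyNormedField 𝕜] {X Y : Type*}
    [NormedAddCommGroup X] [NormedSpace 𝕜 X] [NormedAddCommGroup Y] [NormedSpace 𝕜 Y]
    (k : ℕ) (P : X → Y) : Prop :=
  ∃ Pc : ℕ → X → Y, (∀ j, j ≤ k → IsHomogPoly 𝕜 j (Pc j)) ∧
    ∀ x, P x = ∑ j ∈ Finset.range (k + 1), Pc j x

def MemAu {X W : Type*} [NormedAddCommGroup X] [NormedSpace ℂ X]
    [NormedAddCommGroup W] [NormedSpace ℂ W] (f : X → W) : Prop :=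
  DifferentiableOn ℂ f (Metric.ball (0 : X) 1) ∧
    UniformContinuousOn f (Metric.closedBall (0 : X) 1)

section helpers

variable {X W : Type*} [NormedAddCommGroup X] [NormedAddCommGroup W]

lemma supOnBall_le' {f : X → W} {C : ℝ} (hC : ∀ x : X, ‖x‖ ≤ 1 → ‖f x‖ ≤ C) :
    supOnBall 1 f ≤ C := by
  apply csSup_le
  · exact ⟨‖f 0‖, ⟨0, by simp, rfl⟩⟩
  · rintro r ⟨z, hz, rfl⟩
    exact hC z (by simpa [dist_zero_right] using hz)

lemma le_supOnBall' {f : X → W} {C : ℝ} (hC : ∀ x : X, ‖x‖ ≤ 1 → ‖f x‖ ≤ C)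
    {x : X} (hx : ‖x‖ ≤ 1) : ‖f x‖ ≤ supOnBall 1 f := by
  apply le_csSup
  · refine ⟨C, ?_⟩
    rintro r ⟨z, hz, rfl⟩
    exact hC z (by simpa [dist_zero_right] using hz)
  · exact ⟨x, by simpa [dist_zero_right] using hx, rfl⟩

lemma homog_bound {𝕜 : Type*} [NontriviallyNormedField 𝕜] {Y : Type*} [NormedSpace 𝕜 X]
    [NormedAddCommGroup Y] [NormedSpace 𝕜 Y] {N : ℕ}
    (M : ContinuousMultilinearMap 𝕜 (fun _ : Fin N => X) Y) {x : X} (hx : ‖x‖ ≤ 1) :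
    ‖M (fun _ => x)‖ ≤ ‖M‖ := by
  calc ‖M (fun _ => x)‖ ≤ ‖M‖ * ∏ _i : Fin N, ‖x‖ := M.le_opNorm _
    _ ≤ ‖M‖ * 1 := by
        refine mul_le_mul_of_nonneg_left ?_ (norm_nonneg M)
        exact Finset.prod_le_one (fun _ _ => norm_nonneg x) (fun _ _ => hx)
    _ = ‖M‖ := mul_one _

end helpers

theorem stmt1 {𝕜 : Type*} [RCLike 𝕜] {X Y : Type*}
    [NormedAddCommGroup X] [NormedSpace 𝕜 X] [CompleteSpace X]
    [NormedAddCommGroup Y] [NormedSpace 𝕜 Y] [CompleteSpace Y]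
    {Λ : Type*} (y : Λ → Y) (g : Λ → (Y →L[𝕜] 𝕜)) (lam : ℝ)
    (hlam0 : 0 ≤ lam) (hlam1 : lam < 1)
    (hβ1 : ∀ α, ‖y α‖ = 1 ∧ ‖g α‖ = 1 ∧ g α (y α) = 1)
    (hβ2 : ∀ α β, α ≠ β → ‖g α (y β)‖ ≤ lam)
    (hβ3 : ∀ z : Y, ‖z‖ = ⨆ α, ‖g α z‖)
    (N : ℕ) (hN : 1 ≤ N) (ε : ℝ) (hε0 : 0 < ε) (hε1 : ε ≤ 1)
    (Q : X → Y) (hQ : IsHomogPoly 𝕜 N Q) (hQnorm : supOnBall 1 Q = 1)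
    (α₀ : Λ) (hα₀ : 1 - ε * (1 - lam) / 4 ≤ supOnBall 1 (fun x => g α₀ (Q x)))
    (p : X → 𝕜) (hp : IsHomogPoly 𝕜 N p)
    (hpnorm : supOnBall 1 p = supOnBall 1 (fun x => g α₀ (Q x)))
    (happrox : supOnBall 1 (fun x => g α₀ (Q x) - p x) < ε * (1 - lam) / 2)
    (P : X → Y)
    (hPdef : ∀ x, P x = Q x + ((1 + (ε : 𝕜)) * p x - g α₀ (Q x)) • y α₀) :
    IsHomogPoly 𝕜 N P ∧
    supOnBall 1 (fun x => Q x - P x) ≤ 2 * ε ∧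
    supOnBall 1 P = supOnBall 1 (fun x => g α₀ (P x)) ∧
    supOnBall 1 P = (1 + ε) * supOnBall 1 p ∧
    (∀ x₀ : X, ‖x₀‖ ≤ 1 → ‖p x₀‖ = supOnBall 1 p → ‖P x₀‖ = supOnBall 1 P) := by
  obtain ⟨MQ, hMQ⟩ := hQ
  obtain ⟨Mp, hMp⟩ := hp
  have hg1 : ∀ α (z : Y), ‖g α z‖ ≤ ‖z‖ := by
    intro α z
    have := (g α).le_opNorm z
    rwa [(hβ1 α).2.1, one_mul] at this
  have hQb : ∀ x : X, ‖x‖ ≤ 1 → ‖Q x‖ ≤ ‖MQ‖ := fun x hx => by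
    rw [hMQ]; exact homog_bound MQ hx
  have hpb : ∀ x : X, ‖x‖ ≤ 1 → ‖p x‖ ≤ ‖Mp‖ := fun x hx => by
    rw [hMp]; exact homog_bound Mp hx
  have hQ1 : ∀ x : X, ‖x‖ ≤ 1 → ‖Q x‖ ≤ 1 := fun x hx =>
    hQnorm ▸ le_supOnBall' hQb hx
  set T := supOnBall 1 (fun x => g α₀ (Q x)) with hTdef
  set D := supOnBall 1 (fun x => g α₀ (Q x) - p x) with hDdef
  have hgQb : ∀ x : X, ‖x‖ ≤ 1 → ‖g α₀ (Q x)‖ ≤ 1 := fun x hx =>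
    le_trans (hg1 α₀ (Q x)) (hQ1 x hx)
  have hT1 : T ≤ 1 := supOnBall_le' hgQb
  have hTp : ∀ x : X, ‖x‖ ≤ 1 → ‖p x‖ ≤ T := fun x hx =>
    hpnorm ▸ le_supOnBall' hpb hx
  have hDb : ∀ x : X, ‖x‖ ≤ 1 → ‖g α₀ (Q x) - p x‖ ≤ 1 + ‖Mp‖ := fun x hx => by
    calc ‖g α₀ (Q x) - p x‖ ≤ ‖g α₀ (Q x)‖ + ‖p x‖ := norm_sub_le _ _
      _ ≤ 1 + ‖Mp‖ := add_le_add (hgQb x hx) (hpb x hx)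
  have hDp : ∀ x : X, ‖x‖ ≤ 1 → ‖g α₀ (Q x) - p x‖ ≤ D := fun x hx =>
    le_supOnBall' hDb hx
  have hDlt : D < ε * (1 - lam) / 2 := happrox
  have hT34 : 1 - ε * (1 - lam) / 4 ≤ T := hα₀
  have hT0 : (0:ℝ) ≤ T := le_trans (norm_nonneg (g α₀ (Q 0))) (le_supOnBall' (x := (0:X)) hgQb (by simp))
  have hεnorm : ‖(1 : 𝕜) + (ε : 𝕜)‖ = 1 + ε := by
    have : (1 : 𝕜) + (ε : 𝕜) = ((1 + ε : ℝ) : 𝕜) := by push_cast; ring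
    rw [this, RCLike.norm_ofReal, abs_of_pos (by linarith)]
  have hεnorm' : ‖(ε : 𝕜)‖ = ε := by rw [RCLike.norm_ofReal, abs_of_pos hε0]
  -- key pointwise bound on the correction term
  have hkey : ∀ x : X, ‖x‖ ≤ 1 → ‖(1 + (ε : 𝕜)) * p x - g α₀ (Q x)‖ ≤ ε * T + D := by
    intro x hx
    have heq : (1 + (ε : 𝕜)) * p x - g α₀ (Q x)
        = (ε : 𝕜) * p x - (g α₀ (Q x) - p x) := by ring
    rw [heq]
    calc ‖(ε : 𝕜) * p x - (g α₀ (Q x) - p x)‖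
        ≤ ‖(ε : 𝕜) * p x‖ + ‖g α₀ (Q x) - p x‖ := norm_sub_le _ _
      _ ≤ ε * T + D := by
          rw [norm_mul, hεnorm']
          exact add_le_add (mul_le_mul_of_nonneg_left (hTp x hx) hε0.le) (hDp x hx)
  -- g α₀ ∘ P
  have hgP : ∀ x : X, g α₀ (P x) = (1 + (ε : 𝕜)) * p x := by
    intro x
    rw [hPdef x, map_add, map_smul, (hβ1 α₀).2.2, smul_eq_mul, mul_one]
    ring
  have hgPnorm : ∀ x : X, ‖g α₀ (P x)‖ = (1 + ε) * ‖p x‖ := by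
    intro x
    rw [hgP x, norm_mul, hεnorm]
  -- pointwise bound on P
  haveI : Nonempty Λ := ⟨α₀⟩
  have hPle : ∀ x : X, ‖x‖ ≤ 1 → ‖P x‖ ≤ (1 + ε) * T := by
    intro x hx
    rw [hβ3 (P x)]
    apply ciSup_le
    intro α
    by_cases hα : α = α₀
    · subst hα
      rw [hgPnorm x]
      exact mul_le_mul_of_nonneg_left (hTp x hx) (by linarith)
    · have hform : g α (P x) = g α (Q x) + ((1 + (ε : 𝕜)) * p x - g α₀ (Q x)) * g α (y α₀) := by
        rw [hPdef x, map_add, map_smul, smul_eq_mul]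
      have hb : ‖g α (P x)‖ ≤ 1 + (ε * T + D) * lam := by
        rw [hform]
        calc ‖g α (Q x) + ((1 + (ε : 𝕜)) * p x - g α₀ (Q x)) * g α (y α₀)‖
            ≤ ‖g α (Q x)‖ + ‖(1 + (ε : 𝕜)) * p x - g α₀ (Q x)‖ * ‖g α (y α₀)‖ := by
              rw [← norm_mul]; exact norm_add_le _ _
          _ ≤ 1 + (ε * T + D) * lam := by
              refine add_le_add (le_trans (hg1 α (Q x)) (hQ1 x hx)) ?_
              refine mul_le_mul (hkey x hx) (hβ2 α α₀ hα) (norm_nonneg _) ?_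
              have hD0 : (0:ℝ) ≤ D := le_trans (norm_nonneg _) (hDp 0 (by simp))
              have := mul_nonneg hε0.le hT0
              linarith
      refine hb.trans ?_
      have hD0 : (0:ℝ) ≤ D := le_trans (norm_nonneg _) (hDp 0 (by simp))
      nlinarith [mul_nonneg hε0.le hlam0, mul_nonneg (mul_nonneg hε0.le hlam0) hlam0,
        mul_le_mul_of_nonneg_left hDlt.le hlam0,
        mul_nonneg hε0.le (sub_nonneg.mpr hlam1.le)]
  have hPb := hPle
  have hgPb : ∀ x : X, ‖x‖ ≤ 1 → ‖g α₀ (P x)‖ ≤ (1 + ε) * T := fun x hx =>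
    le_trans (hg1 α₀ (P x)) (hPle x hx)
  -- sup equalities
  have hB : supOnBall 1 (fun x => g α₀ (P x)) = (1 + ε) * T := by
    apply le_antisymm
    · exact supOnBall_le' hgPb
    · rw [← hpnorm]
      have h1ε : (0:ℝ) < 1 + ε := by linarith
      rw [← le_div_iff₀' h1ε]
      apply supOnBall_le'
      intro x hx
      rw [le_div_iff₀' h1ε, ← hgPnorm x]
      exact le_supOnBall' hgPb hx
  have hA : supOnBall 1 P = (1 + ε) * T := by
    apply le_antisymm
    · exact supOnBall_le' hPle
    · rw [← hB]
      apply supOnBall_le'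
      intro x hx
      exact le_trans (hg1 α₀ (P x)) (le_supOnBall' hPle hx)
  refine ⟨?_, ?_, ?_, ?_, ?_⟩
  · -- IsHomogPoly
    refine ⟨MQ + (ContinuousLinearMap.toSpanSingleton 𝕜 (y α₀)).compContinuousMultilinearMap
      ((1 + (ε : 𝕜)) • Mp - (g α₀).compContinuousMultilinearMap MQ), ?_⟩
    intro x
    rw [hPdef x, hMQ x, hMp x]
    simp [ContinuousLinearMap.toSpanSingleton_apply, smul_eq_mul]
  · -- ‖Q - P‖ ≤ 2ε
    apply supOnBall_le'
    intro x hx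
    have : Q x - P x = -(((1 + (ε : 𝕜)) * p x - g α₀ (Q x)) • y α₀) := by
      rw [hPdef x]; abel
    rw [this, norm_neg, norm_smul, (hβ1 α₀).1, mul_one]
    have := hkey x hx
    nlinarith [mul_le_mul_of_nonneg_left hT1 hε0.le, mul_nonneg hε0.le hlam0]
  · rw [hA, hB]
  · rw [hA, hpnorm]
  · intro x₀ hx₀ hpx₀
    have h1 : ‖P x₀‖ ≤ (1 + ε) * T := hPle x₀ hx₀
    have h2 : (1 + ε) * T ≤ ‖P x₀‖ := by
      have := hg1 α₀ (P x₀)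
      rw [hgPnorm x₀, hpx₀, hpnorm] at this
      linarith
    rw [hA]
    linarith
end

section
/- Let X and Y be Banach spaces over 𝕜 (𝕜 = ℝ or ℂ), and suppose Y has property (β). Fix k ∈ ℕ. If the set of norm-attaining continuous scalar polynomials of degree at most k on X is dense in the space of all continuous scalar polynomials of degree at most k on X (with respect to the norm ‖p‖ = sup_{‖x‖≤1} |p(x)|), then the set of norm-attaining continuous polynomials of degree at most k from X to Y is dense in the space of all continuous polynomials of degree at most k from X to Y (with respect to ‖P‖ = sup_{‖x‖≤1} ‖P(x)‖). -/
open Metric Filter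

universe u v

def HasPropertyBeta (𝕜 : Type u) [RCLike 𝕜] (Y : Type v)
    [NormedAddCommGroup Y] [NormedSpace 𝕜 Y] : Prop :=
  ∃ (Λ : Type v) (y : Λ → Y) (g : Λ → (Y →L[𝕜] 𝕜)) (lam : ℝ),
    0 ≤ lam ∧ lam < 1 ∧
    (∀ α, ‖y α‖ = 1 ∧ ‖g α‖ = 1 ∧ g α (y α) = 1) ∧
    (∀ α β, α ≠ β → ‖g α (y β)‖ ≤ lam) ∧
    (∀ z : Y, ‖z‖ = ⨆ α, ‖g α z‖)

lemma poly_bound {𝕜 : Type*} [NontriviallyNormedField 𝕜] {X Y : Type*}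
    [NormedAddCommGroup X] [NormedSpace 𝕜 X] [NormedAddCommGroup Y] [NormedSpace 𝕜 Y]
    {k : ℕ} {P : X → Y} (hP : IsPolyDegLE 𝕜 k P) :
    ∃ C : ℝ, ∀ x ∈ Metric.closedBall (0 : X) 1, ‖P x‖ ≤ C := by
  obtain ⟨Pc, hPc, hsum⟩ := hP
  have key : ∀ j, ∃ Cj : ℝ, ∀ x ∈ Metric.closedBall (0 : X) 1, j ≤ k → ‖Pc j x‖ ≤ Cj := by
    intro j
    by_cases hj : j ≤ k
    · obtain ⟨M, hM⟩ := hPc j hj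
      refine ⟨‖M‖, fun x hx _ => ?_⟩
      rw [hM]
      calc ‖M (fun _ => x)‖ ≤ ‖M‖ * ∏ _i : Fin j, ‖x‖ := M.le_opNorm _
        _ ≤ ‖M‖ * 1 := by
            refine mul_le_mul_of_nonneg_left ?_ (norm_nonneg _)
            rw [Finset.prod_const, Finset.card_univ, Fintype.card_fin]
            exact pow_le_one₀ (norm_nonneg _) (by simpa [dist_zero_right] using hx)
        _ = ‖M‖ := mul_one _
    · exact ⟨0, fun x _ h => absurd h hj⟩
  choose C hC using key
  refine ⟨∑ j ∈ Finset.range (k + 1), C j, fun x hx => ?_⟩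
  rw [hsum]
  calc ‖∑ j ∈ Finset.range (k + 1), Pc j x‖ ≤ ∑ j ∈ Finset.range (k + 1), ‖Pc j x‖ :=
        norm_sum_le _ _
    _ ≤ ∑ j ∈ Finset.range (k + 1), C j := by
        refine Finset.sum_le_sum fun j hj => hC j x hx ?_
        simpa [Nat.lt_succ_iff] using Finset.mem_range.mp hj

lemma poly_comp_clm {𝕜 : Type*} [NontriviallyNormedField 𝕜] {X Y W : Type*}
    [NormedAddCommGroup X] [NormedSpace 𝕜 X] [NormedAddCommGroup Y] [NormedSpace 𝕜 Y]
    [NormedAddCommGroup W] [NormedSpace 𝕜 W]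
    {k : ℕ} {P : X → Y} (hP : IsPolyDegLE 𝕜 k P) (L : Y →L[𝕜] W) :
    IsPolyDegLE 𝕜 k (fun x => L (P x)) := by
  obtain ⟨Pc, hPc, hsum⟩ := hP
  refine ⟨fun j x => L (Pc j x), fun j hj => ?_, fun x => ?_⟩
  · obtain ⟨M, hM⟩ := hPc j hj
    exact ⟨L.compContinuousMultilinearMap M, fun x => by simp [hM]⟩
  · simp only []
    rw [hsum, map_sum]

lemma poly_combo {𝕜 : Type*} [NontriviallyNormedField 𝕜] {X Y : Type*}
    [NormedAddCommGroup X] [NormedSpace 𝕜 X] [NormedAddCommGroup Y] [NormedSpace 𝕜 Y]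
    {k : ℕ} {P : X → Y} {f q : X → 𝕜} (hP : IsPolyDegLE 𝕜 k P)
    (hf : IsPolyDegLE 𝕜 k f) (hq : IsPolyDegLE 𝕜 k q) (c : 𝕜) (v : Y) :
    IsPolyDegLE 𝕜 k (fun x => P x + (c * f x - q x) • v) := by
  obtain ⟨Pc, hPc, hPsum⟩ := hP
  obtain ⟨fc, hfc, hfsum⟩ := hf
  obtain ⟨qc, hqc, hqsum⟩ := hq
  refine ⟨fun j x => Pc j x + (c * fc j x - qc j x) • v, fun j hj => ?_, fun x => ?_⟩
  · obtain ⟨MP, hMP⟩ := hPc j hj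
    obtain ⟨Mf, hMf⟩ := hfc j hj
    obtain ⟨Mq, hMq⟩ := hqc j hj
    refine ⟨MP + (c • Mf - Mq).smulRight v, fun x => ?_⟩
    simp [hMP, hMf, hMq, smul_eq_mul]
  · simp only []
    rw [hPsum, hfsum, hqsum]
    rw [Finset.sum_add_distrib, Finset.mul_sum, ← Finset.sum_sub_distrib, ← Finset.sum_smul]


theorem stmt3 {𝕜 : Type u} [RCLike 𝕜] {X : Type*} {Y : Type v}
    [NormedAddCommGroup X] [NormedSpace 𝕜 X] [CompleteSpace X]
    [NormedAddCommGroup Y] [NormedSpace 𝕜 Y] [CompleteSpace Y]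
    (hβ : HasPropertyBeta 𝕜 Y) (k : ℕ)
    (hdense : ∀ q : X → 𝕜, IsPolyDegLE 𝕜 k q → ∀ ε : ℝ, 0 < ε →
      ∃ p : X → 𝕜, IsPolyDegLE 𝕜 k p ∧
        (∃ x₀ : X, ‖x₀‖ ≤ 1 ∧ ‖p x₀‖ = supOnBall 1 p) ∧
        supOnBall 1 (fun x => q x - p x) < ε) :
    ∀ Q : X → Y, IsPolyDegLE 𝕜 k Q → ∀ ε : ℝ, 0 < ε →
      ∃ P : X → Y, IsPolyDegLE 𝕜 k P ∧
        (∃ x₀ : X, ‖x₀‖ ≤ 1 ∧ ‖P x₀‖ = supOnBall 1 P) ∧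
        supOnBall 1 (fun x => Q x - P x) < ε := by
  intro Q hQ ε hε
  by_cases htriv : supOnBall 1 Q < ε
  · refine ⟨fun _ => 0, ⟨fun _ _ => 0, fun j hj => ⟨0, by simp⟩, by simp⟩, ⟨0, by simp, ?_⟩, ?_⟩
    · have himg : ((fun _ : X => ‖(0 : Y)‖) '' Metric.closedBall (0 : X) 1) = {‖(0 : Y)‖} :=
        Set.Nonempty.image_const ⟨0, Metric.mem_closedBall_self zero_le_one⟩ _
      simp only [supOnBall]
      rw [show (fun x : X => ‖(fun _ : X => (0 : Y)) x‖) = fun _ : X => ‖(0 : Y)‖ from rfl,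
        himg, csSup_singleton]
    · simpa using htriv
  push_neg at htriv
  obtain ⟨Λ, yv, g, lam, hlam0, hlam1, hone, hsep, hsup⟩ := hβ
  set S := supOnBall 1 Q with hSdef
  have hSpos : 0 < S := lt_of_lt_of_le hε htriv
  have h1lam : 0 < 1 - lam := by linarith
  set δ := min (S / 8) (ε * (1 - lam) / 8) with hδdef
  have hδpos : 0 < δ := lt_min (by linarith) (div_pos (mul_pos hε h1lam) (by norm_num))
  have hδS : δ ≤ S / 8 := min_le_left _ _
  have hδε : δ ≤ ε * (1 - lam) / 8 := min_le_right _ _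
  obtain ⟨CQ, hCQ⟩ := poly_bound hQ
  have bddQ : BddAbove ((fun x => ‖Q x‖) '' Metric.closedBall (0 : X) 1) :=
    ⟨CQ, by rintro _ ⟨x, hx, rfl⟩; exact hCQ x hx⟩
  have hQle : ∀ x ∈ Metric.closedBall (0 : X) 1, ‖Q x‖ ≤ S :=
    fun x hx => le_csSup bddQ ⟨x, hx, rfl⟩
  have hne : ((fun x => ‖Q x‖) '' Metric.closedBall (0 : X) 1).Nonempty :=
    ⟨_, ⟨0, Metric.mem_closedBall_self zero_le_one, rfl⟩⟩
  obtain ⟨_, ⟨x₁, hx₁, rfl⟩, hx₁S'⟩ :=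
    exists_lt_of_lt_csSup hne (show S - δ < S by linarith)
  have hx₁S : S - δ < ‖Q x₁‖ := hx₁S'
  haveI : Nonempty Λ := by
    by_contra h
    haveI : IsEmpty Λ := not_nonempty_iff.mp h
    have h0 : ‖Q x₁‖ = 0 := by
      rw [hsup (Q x₁), iSup, Set.range_eq_empty, Real.sSup_empty]
    rw [h0] at hx₁S
    linarith
  have hx₂ : S - δ < ⨆ β, ‖g β (Q x₁)‖ := by rw [← hsup (Q x₁)]; exact hx₁S
  obtain ⟨α, hα⟩ := exists_lt_of_lt_ciSup hx₂
  set q : X → 𝕜 := fun x => g α (Q x) with hqdef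
  have hq : IsPolyDegLE 𝕜 k q := poly_comp_clm hQ (g α)
  obtain ⟨p, hp, ⟨x₀, hx₀, hpx₀⟩, hqp⟩ := hdense q hq δ hδpos
  obtain ⟨Cp, hCp⟩ := poly_bound hp
  obtain ⟨Cq, hCq⟩ := poly_bound hq
  set t := supOnBall 1 p with htdef
  have bddp : BddAbove ((fun x => ‖p x‖) '' Metric.closedBall (0 : X) 1) :=
    ⟨Cp, by rintro _ ⟨x, hx, rfl⟩; exact hCp x hx⟩
  have hple : ∀ x ∈ Metric.closedBall (0 : X) 1, ‖p x‖ ≤ t :=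
    fun x hx => le_csSup bddp ⟨x, hx, rfl⟩
  have bdddiff : BddAbove ((fun x => ‖q x - p x‖) '' Metric.closedBall (0 : X) 1) := by
    refine ⟨Cq + Cp, ?_⟩
    rintro _ ⟨x, hx, rfl⟩
    exact (norm_sub_le _ _).trans (add_le_add (hCq x hx) (hCp x hx))
  have hdiffle : ∀ x ∈ Metric.closedBall (0 : X) 1, ‖q x - p x‖ < δ :=
    fun x hx => lt_of_le_of_lt (le_csSup bdddiff ⟨x, hx, rfl⟩) hqp
  have ht1 : S - 2 * δ < t := by
    have h1 : ‖p x₁‖ ≤ t := hple x₁ hx₁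
    have h2 : ‖q x₁ - p x₁‖ < δ := hdiffle x₁ hx₁
    have h3 : S - δ < ‖q x₁‖ := hα
    have h4 : ‖q x₁‖ - ‖p x₁‖ ≤ ‖q x₁ - p x₁‖ := norm_sub_norm_le _ _
    linarith
  have htpos : 0 < t := by linarith
  set η := 3 * δ / ((1 - lam) * t) with hηdef
  have hηpos : 0 < η := by positivity
  have hηt : η * t = 3 * δ / (1 - lam) := by
    rw [hηdef]
    field_simp
  set c : 𝕜 := ((1 + η : ℝ) : 𝕜) with hcdef
  have hnc : ‖c - 1‖ = η := by
    have hc1 : c - 1 = ((η : ℝ) : 𝕜) := by rw [hcdef]; push_cast; ring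
    rw [hc1, RCLike.norm_ofReal, abs_of_pos hηpos]
  have hnc' : ‖c‖ = 1 + η := by
    rw [hcdef, RCLike.norm_ofReal, abs_of_pos (by linarith)]
  set P : X → Y := fun x => Q x + (c * p x - q x) • yv α with hPdef
  have hPpoly : IsPolyDegLE 𝕜 k P := poly_combo hQ hp hq c (yv α)
  have hfb : ∀ x ∈ Metric.closedBall (0 : X) 1, ‖c * p x - q x‖ ≤ η * t + δ := by
    intro x hx
    have hsplit : c * p x - q x = (c - 1) * p x + (p x - q x) := by ring
    calc ‖c * p x - q x‖ ≤ ‖(c - 1) * p x‖ + ‖p x - q x‖ := by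
          rw [hsplit]; exact norm_add_le _ _
      _ ≤ η * t + δ := by
          rw [norm_mul, hnc, norm_sub_rev]
          exact add_le_add (mul_le_mul_of_nonneg_left (hple x hx) hηpos.le)
            (hdiffle x hx).le
  have hgα : ∀ x, g α (P x) = c * p x := by
    intro x
    have h1 : g α (yv α) = 1 := (hone α).2.2
    simp only [hPdef, map_add, map_smul, smul_eq_mul, h1, mul_one]
    show g α (Q x) + (c * p x - q x) = c * p x
    rw [hqdef]
    ring
  have hgle : ∀ (β : Λ) (z : Y), ‖g β z‖ ≤ ‖z‖ := by
    intro β z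
    calc ‖g β z‖ ≤ ‖g β‖ * ‖z‖ := (g β).le_opNorm z
      _ = ‖z‖ := by rw [(hone β).2.1, one_mul]
  have hkey : S + lam * (η * t + δ) ≤ (1 + η) * t := by
    have h5 : lam * δ ≤ δ := by nlinarith [mul_pos h1lam hδpos]
    have h6 : η * t * (1 - lam) = 3 * δ := by
      rw [hηt]; field_simp
    nlinarith [ht1, h5, h6]
  have hbound : ∀ x ∈ Metric.closedBall (0 : X) 1, ∀ β, ‖g β (P x)‖ ≤ (1 + η) * t := by
    intro x hx β
    by_cases hβα : β = α
    · subst hβα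
      rw [hgα x, norm_mul, hnc']
      exact mul_le_mul_of_nonneg_left (hple x hx) (by linarith)
    · have hβ' : g β (P x) = g β (Q x) + (c * p x - q x) * g β (yv α) := by
        simp only [hPdef, map_add, map_smul, smul_eq_mul]
      calc ‖g β (P x)‖ ≤ ‖g β (Q x)‖ + ‖c * p x - q x‖ * ‖g β (yv α)‖ := by
            rw [hβ']
            exact (norm_add_le _ _).trans (by rw [norm_mul])
        _ ≤ S + (η * t + δ) * lam :=
            add_le_add ((hgle β _).trans (hQle x hx))
              (mul_le_mul (hfb x hx) (hsep β α hβα) (norm_nonneg _) (by positivity))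
        _ = S + lam * (η * t + δ) := by ring
        _ ≤ (1 + η) * t := hkey
  have hPxle : ∀ x ∈ Metric.closedBall (0 : X) 1, ‖P x‖ ≤ (1 + η) * t := by
    intro x hx
    rw [hsup (P x)]
    exact ciSup_le fun β => hbound x hx β
  have hsupPle : supOnBall 1 P ≤ (1 + η) * t :=
    Real.sSup_le (by rintro _ ⟨x, hx, rfl⟩; exact hPxle x hx) (by positivity)
  have hx₀B : x₀ ∈ Metric.closedBall (0 : X) 1 := by
    simpa [dist_zero_right] using hx₀
  have hPx₀ : (1 + η) * t ≤ ‖P x₀‖ := by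
    have h7 := hgle α (P x₀)
    rw [hgα x₀, norm_mul, hnc', hpx₀] at h7
    exact h7
  have hbddP : BddAbove ((fun x => ‖P x‖) '' Metric.closedBall (0 : X) 1) :=
    ⟨(1 + η) * t, by rintro _ ⟨x, hx, rfl⟩; exact hPxle x hx⟩
  refine ⟨P, hPpoly, ⟨x₀, hx₀,
    le_antisymm (le_csSup hbddP ⟨x₀, hx₀B, rfl⟩) (hsupPle.trans hPx₀)⟩, ?_⟩
  have hfinal : ∀ x ∈ Metric.closedBall (0 : X) 1, ‖Q x - P x‖ ≤ η * t + δ := by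
    intro x hx
    have h8 : Q x - P x = -((c * p x - q x) • yv α) := by
      rw [hPdef]; show Q x - (Q x + (c * p x - q x) • yv α) = _; abel
    rw [h8, norm_neg, norm_smul, (hone α).1, mul_one]
    exact hfb x hx
  have hsupdiff : supOnBall 1 (fun x => Q x - P x) ≤ η * t + δ :=
    Real.sSup_le (by rintro _ ⟨x, hx, rfl⟩; exact hfinal x hx) (by positivity)
  have hεb : η * t + δ < ε := by
    have h9 : η * t ≤ 3 * ε / 8 := by
      rw [hηt, div_le_iff₀ h1lam]
      linarith [hδε]
    have h10 : δ ≤ ε / 8 := hδε.trans (by linarith [mul_nonneg hε.le hlam0])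
    linarith
  linarith
end

section
/- Let X and W be complex Banach spaces and let 0 < s ≤ s₀ ≤ 1. Suppose that for every g ∈ A_u(X;W) and every ε > 0 there exists f ∈ A_u(X;W) that attains its ‖·‖_s-norm and satisfies ‖g − f‖_{s₀} < ε. Then for every g ∈ A_u(X;W) and every ε > 0 there exists h ∈ A_u(X;W) that attains its norm (the supremum norm over the closed unit ball) and satisfies ‖g − h‖ < ε; that is, the Bishop–Phelps theorem holds in A_u(X;W). -/
open Metric Filter

set_option linter.unusedSectionVars false

section Aux

variable {X W : Type*} [NormedAddCommGroup X] [NormedSpace ℂ X]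
  [NormedAddCommGroup W] [NormedSpace ℂ W]

lemma aux_sup_le {u : X → W} {t M : ℝ} (hM : 0 ≤ M)
    (h : ∀ x ∈ closedBall (0 : X) t, ‖u x‖ ≤ M) : supOnBall t u ≤ M := by
  apply Real.sSup_le _ hM
  rintro y ⟨x, hx, rfl⟩
  exact h x hx

lemma aux_le_sup {u : X → W} {t M : ℝ} (h : ∀ y ∈ closedBall (0 : X) t, ‖u y‖ ≤ M)
    {x : X} (hx : x ∈ closedBall (0 : X) t) : ‖u x‖ ≤ supOnBall t u := by
  apply le_csSup
  · refine ⟨M, ?_⟩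
    rintro y ⟨z, hz, rfl⟩
    exact h z hz
  · exact ⟨x, hx, rfl⟩

lemma aux_sup_nonneg {u : X → W} {t : ℝ} : 0 ≤ supOnBall t u := by
  apply Real.sSup_nonneg
  rintro y ⟨z, hz, rfl⟩
  exact norm_nonneg _

lemma aux_sup_dilate {f : X → W} {s : ℝ} (hs : 0 < s) :
    supOnBall 1 (fun x => f ((s : ℂ) • x)) = supOnBall s f := by
  unfold supOnBall
  congr 1
  ext v
  constructor
  · rintro ⟨x, hx, rfl⟩
    refine ⟨(s : ℂ) • x, ?_, rfl⟩
    rw [mem_closedBall, dist_zero_right] at hx ⊢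
    rw [norm_smul, Complex.norm_real, Real.norm_eq_abs, abs_of_pos hs]
    calc s * ‖x‖ ≤ s * 1 := by nlinarith [norm_nonneg x]
    _ = s := mul_one s
  · rintro ⟨y, hy, rfl⟩
    have hs' : (s : ℂ) ≠ 0 := by
      simpa using hs.ne'
    refine ⟨(s : ℂ)⁻¹ • y, ?_, ?_⟩
    · rw [mem_closedBall, dist_zero_right] at hy ⊢
      rw [norm_smul, norm_inv, Complex.norm_real, Real.norm_eq_abs, abs_of_pos hs]
      rw [inv_mul_le_iff₀ hs, mul_one]
      exact hy
    · simp only [smul_smul, mul_inv_cancel₀ hs', one_smul]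

lemma aux_bounded {g : X → W} (hg : UniformContinuousOn g (closedBall (0 : X) 1)) :
    ∃ M : ℝ, 0 ≤ M ∧ ∀ x ∈ closedBall (0 : X) 1, ‖g x‖ ≤ M := by
  rw [Metric.uniformContinuousOn_iff] at hg
  obtain ⟨δ, hδ, H⟩ := hg 1 one_pos
  obtain ⟨m, hm⟩ := exists_nat_one_div_lt hδ
  refine ⟨‖g 0‖ + (m + 1), by positivity, ?_⟩
  intro x hx
  rw [mem_closedBall, dist_zero_right] at hx
  have key : ∀ k : ℕ, k ≤ m + 1 → ‖g (((k : ℝ) / (m + 1)) • x)‖ ≤ ‖g 0‖ + k := by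
    intro k
    induction k with
    | zero => intro _; simp
    | succ k ih =>
      intro hk1
      have hk : k ≤ m + 1 := by omega
      have hmem : ∀ j : ℕ, j ≤ m + 1 → ((j : ℝ) / (m + 1)) • x ∈ closedBall (0 : X) 1 := by
        intro j hj
        rw [mem_closedBall, dist_zero_right, norm_smul, Real.norm_eq_abs]
        have h1 : (j : ℝ) / (m + 1) ≤ 1 := by
          rw [div_le_one (by positivity)]
          exact_mod_cast hj
        have h0 : (0 : ℝ) ≤ (j : ℝ) / (m + 1) := by positivity
        rw [abs_of_nonneg h0]
        nlinarith [norm_nonneg x]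
      have hd : dist (((k : ℝ) / (m + 1)) • x) ((((k + 1 : ℕ) : ℝ) / (m + 1)) • x) < δ := by
        rw [dist_eq_norm, ← sub_smul, norm_smul, Real.norm_eq_abs]
        have : (k : ℝ) / (m + 1) - ((k + 1 : ℕ) : ℝ) / (m + 1) = -(1 / (m + 1)) := by
          push_cast; ring
        rw [this, abs_neg, abs_of_pos (by positivity)]
        calc 1 / ((m : ℝ) + 1) * ‖x‖ ≤ 1 / ((m : ℝ) + 1) * 1 := by
              apply mul_le_mul_of_nonneg_left hx (by positivity)
        _ = 1 / ((m : ℝ) + 1) := mul_one _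
        _ < δ := hm
      have := H _ (hmem k hk) _ (hmem (k + 1) hk1) hd
      rw [dist_eq_norm] at this
      have htri : ‖g ((((k + 1 : ℕ) : ℝ) / (m + 1)) • x)‖ ≤
          ‖g (((k : ℝ) / (m + 1)) • x)‖ + 1 := by
        have h2 := norm_sub_norm_le (g (((k : ℝ) / (m + 1)) • x))
          (g ((((k + 1 : ℕ) : ℝ) / (m + 1)) • x))
        have := this.le
        calc ‖g ((((k + 1 : ℕ) : ℝ) / (m + 1)) • x)‖
            ≤ ‖g (((k : ℝ) / (m + 1)) • x)‖ +
              ‖g (((k : ℝ) / (m + 1)) • x) - g ((((k + 1 : ℕ) : ℝ) / (m + 1)) • x)‖ := by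
              have := norm_le_insert (g (((k : ℝ) / (m + 1)) • x))
                (g ((((k + 1 : ℕ) : ℝ) / (m + 1)) • x))
              -- fallback: triangle inequality
              calc ‖g ((((k + 1 : ℕ) : ℝ) / (m + 1)) • x)‖
                  = ‖g (((k : ℝ) / (m + 1)) • x) -
                    (g (((k : ℝ) / (m + 1)) • x) - g ((((k + 1 : ℕ) : ℝ) / (m + 1)) • x))‖ := by
                    congr 1; abel
                _ ≤ _ := norm_sub_le _ _
        _ ≤ ‖g (((k : ℝ) / (m + 1)) • x)‖ + 1 := by linarith
      calc ‖g ((((k + 1 : ℕ) : ℝ) / (m + 1)) • x)‖ ≤ ‖g (((k : ℝ) / (m + 1)) • x)‖ + 1 := htri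
      _ ≤ ‖g 0‖ + k + 1 := by linarith [ih hk]
      _ = ‖g 0‖ + (k + 1 : ℕ) := by push_cast; ring
  have := key (m + 1) le_rfl
  have hone : (((m + 1 : ℕ) : ℝ) / (m + 1)) • x = x := by
    have : ((m + 1 : ℕ) : ℝ) / (m + 1) = 1 := by
      rw [div_eq_one_iff_eq (by positivity)]; push_cast; ring
    rw [this, one_smul]
  rw [hone] at this
  calc ‖g x‖ ≤ ‖g 0‖ + ((m + 1 : ℕ) : ℝ) := this
  _ = ‖g 0‖ + (m + 1) := by push_cast; ring

lemma aux_ucOn_comp_smul {g : X → W} (hg : UniformContinuousOn g (closedBall (0 : X) 1))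
    (e : ℂ) (he : ‖e‖ ≤ 1) :
    UniformContinuousOn (fun x => g (e • x)) (closedBall (0 : X) 1) := by
  rw [Metric.uniformContinuousOn_iff] at hg ⊢
  intro ε hε
  obtain ⟨δ, hδ, H⟩ := hg ε hε
  refine ⟨δ, hδ, fun x hx y hy hxy => ?_⟩
  have hmem : ∀ z : X, z ∈ closedBall (0 : X) 1 → e • z ∈ closedBall (0 : X) 1 := by
    intro z hz
    rw [mem_closedBall, dist_zero_right] at hz ⊢
    rw [norm_smul]
    calc ‖e‖ * ‖z‖ ≤ 1 * 1 := by
          apply mul_le_mul he hz (norm_nonneg _) zero_le_one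
    _ = 1 := one_mul 1
  apply H _ (hmem x hx) _ (hmem y hy)
  have hle : dist (e • x) (e • y) ≤ dist x y := by
    rw [dist_eq_norm, dist_eq_norm, ← smul_sub, norm_smul]
    calc ‖e‖ * ‖x - y‖ ≤ 1 * ‖x - y‖ :=
          mul_le_mul_of_nonneg_right he (norm_nonneg _)
    _ = ‖x - y‖ := one_mul _
  exact lt_of_le_of_lt hle hxy

lemma aux_ucOn_add {u v : X → W} {s : Set X} (hu : UniformContinuousOn u s)
    (hv : UniformContinuousOn v s) : UniformContinuousOn (fun x => u x + v x) s := by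
  rw [Metric.uniformContinuousOn_iff] at hu hv ⊢
  intro ε hε
  obtain ⟨δ₁, hδ₁, H₁⟩ := hu (ε / 2) (by linarith)
  obtain ⟨δ₂, hδ₂, H₂⟩ := hv (ε / 2) (by linarith)
  refine ⟨min δ₁ δ₂, lt_min hδ₁ hδ₂, fun x hx y hy hxy => ?_⟩
  have h1 := H₁ x hx y hy (hxy.trans_le (min_le_left _ _))
  have h2 := H₂ x hx y hy (hxy.trans_le (min_le_right _ _))
  rw [dist_eq_norm] at h1 h2 ⊢
  calc ‖u x + v x - (u y + v y)‖ = ‖(u x - u y) + (v x - v y)‖ := by congr 1; abel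
  _ ≤ ‖u x - u y‖ + ‖v x - v y‖ := norm_add_le _ _
  _ < ε / 2 + ε / 2 := by linarith
  _ = ε := by ring

lemma aux_ucOn_const_smul {u : X → W} {s : Set X} (c : ℂ) (hu : UniformContinuousOn u s) :
    UniformContinuousOn (fun x => c • u x) s := by
  rw [Metric.uniformContinuousOn_iff] at hu ⊢
  intro ε hε
  obtain ⟨δ, hδ, H⟩ := hu (ε / (‖c‖ + 1)) (by positivity)
  refine ⟨δ, hδ, fun x hx y hy hxy => ?_⟩
  have h1 := H x hx y hy hxy
  rw [dist_eq_norm] at h1 ⊢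
  rw [← smul_sub, norm_smul]
  calc ‖c‖ * ‖u x - u y‖ ≤ ‖c‖ * (ε / (‖c‖ + 1)) := by
        apply mul_le_mul_of_nonneg_left h1.le (norm_nonneg _)
  _ < ε := by
      rw [mul_div_assoc']
      rw [div_lt_iff₀ (by positivity)]
      nlinarith [norm_nonneg c]

lemma aux_ucOn_sum {ι : Type*} (t : Finset ι) (F : ι → X → W) {s : Set X}
    (h : ∀ i ∈ t, UniformContinuousOn (F i) s) :
    UniformContinuousOn (fun x => ∑ i ∈ t, F i x) s := by
  classical
  induction t using Finset.induction_on with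
  | empty =>
      simp only [Finset.sum_empty]
      rw [Metric.uniformContinuousOn_iff]
      intro ε hε
      exact ⟨1, one_pos, fun x _ y _ _ => by simpa using hε⟩
  | insert a t' hnot ih =>
      simp only [Finset.sum_insert hnot]
      exact aux_ucOn_add (h a (Finset.mem_insert_self a t'))
        (ih fun i hi => h i (Finset.mem_insert_of_mem hi))

end Aux

set_option maxHeartbeats 1000000


section Key

variable {W : Type*} [NormedAddCommGroup W] [NormedSpace ℂ W] [CompleteSpace W]

lemma key1 {φ : ℂ → W} {M r ρ ρ' t : ℝ} (n : ℕ)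
    (hd : DifferentiableOn ℂ φ (closedBall (0 : ℂ) ρ'))
    (hM : ∀ μ : ℂ, ‖μ‖ ≤ ρ' → ‖φ μ‖ ≤ M)
    (hr : 0 < r) (hrρ : r < ρ) (hρρ' : ρ < ρ') (hρ'1 : ρ' < 1)
    (ht : 0 < t) (ht1 : t ≤ 1)
    (ω : ℂ) (hω : ω = Complex.exp (2 * Real.pi * Complex.I / ((n : ℂ) + 1)))
    (c : ℕ → ℂ)
    (hc : ∀ j, c j = ((n : ℂ) + 1)⁻¹ *
      ∑ l ∈ Finset.range (n + 1), ((r / (ρ * t) : ℝ) : ℂ) ^ l * ((ω⁻¹) ^ l) ^ j) :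
    ‖φ (r : ℂ) - ∑ j ∈ Finset.range (n + 1), c j • φ (((ρ * t : ℝ) : ℂ) * ω ^ j)‖ ≤
      2 * M * (ρ / ρ') ^ (n + 1) / (1 - ρ / ρ') := by
  have hρ0 : 0 < ρ := hr.trans hrρ
  have hρ'0 : 0 < ρ' := hρ0.trans hρρ'
  have hρt : 0 < ρ * t := mul_pos hρ0 ht
  have hM0 : 0 ≤ M := le_trans (norm_nonneg _) (hM 0 (by simp [hρ'0.le]))
  set N := n + 1 with hN
  have hN0 : (N : ℕ) ≠ 0 := Nat.succ_ne_zero n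
  have hNpos : 0 < N := Nat.succ_pos n
  have hNc : ((N : ℕ) : ℂ) = (n : ℂ) + 1 := by rw [hN]; push_cast; ring
  have hNcne : ((N : ℕ) : ℂ) ≠ 0 := by
    rw [hNc]
    intro h
    have := congrArg Complex.re h
    push_cast at this
    simp at this
    linarith [Nat.cast_nonneg (α := ℝ) n, this]
  -- primitive root facts
  have hprim : IsPrimitiveRoot ω N := by
    rw [hω, ← hNc]
    exact Complex.isPrimitiveRoot_exp N hN0
  have hω1 : ω ^ N = 1 := hprim.pow_eq_one
  have hω0 : ω ≠ 0 := by
    rw [hω]; exact Complex.exp_ne_zero _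
  have hωabs : ‖ω‖ = 1 := by
    rw [hω]
    have hcast : (2 * (Real.pi : ℂ) * Complex.I / ((n : ℂ) + 1)) =
        ((2 * Real.pi / (n + 1) : ℝ) : ℂ) * Complex.I := by push_cast; ring
    rw [hcast, Complex.norm_exp_ofReal_mul_I]
  -- power series
  set R : NNReal := ⟨ρ', hρ'0.le⟩ with hR
  have hRcoe : (R : ℝ) = ρ' := rfl
  have hdd : DifferentiableOn ℂ φ (closedBall (0 : ℂ) (R : ℝ)) := by rw [hRcoe]; exact hd
  have hRpos : (0 : NNReal) < R := by
    rw [← NNReal.coe_lt_coe, hRcoe]; exact hρ'0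
  have HB : HasFPowerSeriesOnBall φ (cauchyPowerSeries φ 0 (R : ℝ)) 0 R :=
    hdd.hasFPowerSeriesOnBall hRpos
  set p := cauchyPowerSeries φ 0 (R : ℝ) with hp
  set a : ℕ → W := fun k => p.coeff k with ha
  have hasum : ∀ μ : ℂ, ‖μ‖ < ρ' → HasSum (fun k => μ ^ k • a k) (φ μ) := by
    intro μ hμ
    have h2 : ‖μ‖₊ < R := by
      rw [← NNReal.coe_lt_coe, coe_nnnorm, hRcoe]; exact hμ
    have hmem : μ ∈ Metric.eball (0 : ℂ) R := by
      rw [mem_emetric_ball_zero_iff]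
      exact_mod_cast h2
    have := HB.hasSum hmem
    rw [zero_add] at this
    simpa only [FormalMultilinearSeries.apply_eq_pow_smul_coeff] using this
  have hcoef : ∀ k, ‖a k‖ ≤ M / ρ' ^ k := by
    intro k
    have h1 : ‖a k‖ ≤ ‖p k‖ := by
      have h := (p k).le_opNorm (fun _ => (1 : ℂ))
      have hck : a k = p k (fun _ => (1 : ℂ)) := rfl
      rw [hck]
      simpa using h
    have h2 := norm_cauchyPowerSeries_le φ 0 (R : ℝ) k
    have hcont : Continuous fun θ : ℝ => ‖φ (circleMap 0 (R : ℝ) θ)‖ := by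
      apply Continuous.norm
      apply (hd.continuousOn).comp_continuous (continuous_circleMap 0 (R : ℝ))
      intro θ
      have hmem := circleMap_mem_sphere (0 : ℂ) (le_of_lt hρ'0) θ
      rw [hRcoe]
      exact sphere_subset_closedBall hmem
    have hint : (∫ θ in (0 : ℝ)..2 * Real.pi, ‖φ (circleMap 0 (R : ℝ) θ)‖) ≤
        2 * Real.pi * M := by
      have hIle : (∫ θ in (0 : ℝ)..2 * Real.pi, ‖φ (circleMap 0 (R : ℝ) θ)‖) ≤
          ∫ _ in (0 : ℝ)..2 * Real.pi, M := by
        apply intervalIntegral.integral_mono_on Real.two_pi_pos.le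
          (hcont.intervalIntegrable _ _) intervalIntegrable_const
        intro θ _
        apply hM
        have : ‖circleMap 0 (R : ℝ) θ‖ = |(R : ℝ)| := by
          rw [norm_circleMap_zero]
        rw [this, hRcoe, abs_of_pos hρ'0]
      calc (∫ θ in (0 : ℝ)..2 * Real.pi, ‖φ (circleMap 0 (R : ℝ) θ)‖) ≤
          ∫ _ in (0 : ℝ)..2 * Real.pi, M := hIle
      _ = 2 * Real.pi * M := by
          rw [intervalIntegral.integral_const, smul_eq_mul, sub_zero]
    have h3 : ((2 * Real.pi)⁻¹ * ∫ θ in (0 : ℝ)..2 * Real.pi,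
        ‖φ (circleMap 0 (R : ℝ) θ)‖) * |(R : ℝ)|⁻¹ ^ k ≤ M / ρ' ^ k := by
      rw [hRcoe, abs_of_pos hρ'0]
      have hstep : (2 * Real.pi)⁻¹ * (∫ θ in (0 : ℝ)..2 * Real.pi,
          ‖φ (circleMap 0 (R : ℝ) θ)‖) ≤ M := by
        calc (2 * Real.pi)⁻¹ * (∫ θ in (0 : ℝ)..2 * Real.pi, ‖φ (circleMap 0 (R : ℝ) θ)‖)
            ≤ (2 * Real.pi)⁻¹ * (2 * Real.pi * M) := by
              exact mul_le_mul_of_nonneg_left hint (by positivity)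
        _ = M := by field_simp
      calc ((2 * Real.pi)⁻¹ * ∫ θ in (0 : ℝ)..2 * Real.pi,
          ‖φ (circleMap 0 (R : ℝ) θ)‖) * (ρ')⁻¹ ^ k ≤ M * (ρ')⁻¹ ^ k := by
            exact mul_le_mul_of_nonneg_right hstep (by positivity)
      _ = M / ρ' ^ k := by rw [inv_pow, div_eq_mul_inv]
    exact le_trans h1 (le_trans h2 h3)
  -- orthogonality
  set d : ℕ → ℂ := fun l => ((r / (ρ * t) : ℝ) : ℂ) ^ l with hdd'
  have horth : ∀ k : ℕ, (∑ j ∈ Finset.range N, c j * (ω ^ j) ^ k) = d (k % N) := by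
    intro k
    have hkmod : ω ^ k = ω ^ (k % N) := by
      conv_lhs => rw [← Nat.div_add_mod k N]
      rw [pow_add, pow_mul, hω1, one_pow, one_mul]
    have step1 : (∑ j ∈ Finset.range N, c j * (ω ^ j) ^ k)
        = ∑ j ∈ Finset.range N, ∑ l ∈ Finset.range N,
            ((n : ℂ) + 1)⁻¹ * (d l * ((ω⁻¹) ^ l * ω ^ k) ^ j) := by
      apply Finset.sum_congr rfl
      intro j _
      rw [hc j, mul_assoc, Finset.sum_mul, Finset.mul_sum]
      apply Finset.sum_congr rfl
      intro l _
      rw [hdd']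
      ring
    rw [step1, Finset.sum_comm]
    have hgeom : ∀ l ∈ Finset.range N, (∑ j ∈ Finset.range N, ((ω⁻¹) ^ l * ω ^ k) ^ j)
        = if l = k % N then ((N : ℕ) : ℂ) else 0 := by
      intro l hl
      rw [Finset.mem_range] at hl
      set z := (ω⁻¹) ^ l * ω ^ k with hz
      have hzN : z ^ N = 1 := by
        have h1 : (ω⁻¹) ^ N = 1 := by rw [inv_pow, hω1, inv_one]
        rw [hz, mul_pow, ← pow_mul, mul_comm l N, pow_mul, h1, one_pow, one_mul,
          ← pow_mul, mul_comm k N, pow_mul, hω1, one_pow]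
      have hiff : z = 1 ↔ l = k % N := by
        rw [hz, inv_pow, inv_mul_eq_one₀ (pow_ne_zero l hω0)]
        constructor
        · intro h
          rw [hkmod] at h
          exact hprim.pow_inj hl (Nat.mod_lt k hNpos) h
        · intro h
          rw [h, ← hkmod]
      by_cases hcase : l = k % N
      · rw [if_pos hcase]
        have hz1 : z = 1 := hiff.mpr hcase
        calc (∑ j ∈ Finset.range N, z ^ j) = ∑ j ∈ Finset.range N, 1 := by
              apply Finset.sum_congr rfl
              intro j _
              rw [hz1, one_pow]
        _ = ((N : ℕ) : ℂ) := by rw [Finset.sum_const, Finset.card_range]; simp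
      · rw [if_neg hcase]
        have hz1 : z ≠ 1 := fun h => hcase (hiff.mp h)
        rw [geom_sum_eq hz1 N, hzN, sub_self, zero_div]
    calc (∑ l ∈ Finset.range N, ∑ j ∈ Finset.range N,
        ((n : ℂ) + 1)⁻¹ * (d l * ((ω⁻¹) ^ l * ω ^ k) ^ j))
        = ∑ l ∈ Finset.range N,
            ((n : ℂ) + 1)⁻¹ * (d l * ∑ j ∈ Finset.range N, ((ω⁻¹) ^ l * ω ^ k) ^ j) := by
          apply Finset.sum_congr rfl
          intro l _
          rw [Finset.mul_sum, Finset.mul_sum]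
    _ = ∑ l ∈ Finset.range N,
          (if l = k % N then ((n : ℂ) + 1)⁻¹ * (d l * ((N : ℕ) : ℂ)) else 0) := by
        apply Finset.sum_congr rfl
        intro l hl
        rw [hgeom l hl]
        by_cases hcase : l = k % N
        · rw [if_pos hcase, if_pos hcase]
        · rw [if_neg hcase, if_neg hcase, mul_zero, mul_zero]
    _ = ((n : ℂ) + 1)⁻¹ * (d (k % N) * ((N : ℕ) : ℂ)) := by
        rw [Finset.sum_ite_eq' (Finset.range N) (k % N)
          (fun l => ((n : ℂ) + 1)⁻¹ * (d l * ((N : ℕ) : ℂ)))]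
        rw [if_pos (Finset.mem_range.mpr (Nat.mod_lt k hNpos))]
    _ = d (k % N) := by
        rw [← hNc]
        field_simp
  -- HasSum assembly
  have habs_pt : ∀ j : ℕ, ‖((ρ * t : ℝ) : ℂ) * ω ^ j‖ < ρ' := by
    intro j
    rw [norm_mul, norm_pow, hωabs, one_pow, mul_one, Complex.norm_real,
      Real.norm_eq_abs, abs_of_pos hρt]
    nlinarith
  have Hr : HasSum (fun k => ((r : ℂ)) ^ k • a k) (φ (r : ℂ)) := by
    apply hasum
    rw [Complex.norm_real, Real.norm_eq_abs, abs_of_pos hr]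
    nlinarith
  have Hj : ∀ j ∈ Finset.range N,
      HasSum (fun k => (c j * (((ρ * t : ℝ) : ℂ) * ω ^ j) ^ k) • a k)
        (c j • φ (((ρ * t : ℝ) : ℂ) * ω ^ j)) := by
    intro j _
    have h := (hasum _ (habs_pt j)).const_smul (c j)
    simpa only [smul_smul] using h
  have HT : HasSum
      (fun k => (∑ j ∈ Finset.range N, c j * (((ρ * t : ℝ) : ℂ) * ω ^ j) ^ k) • a k)
      (∑ j ∈ Finset.range N, c j • φ (((ρ * t : ℝ) : ℂ) * ω ^ j)) := by
    have h := hasSum_sum Hj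
    have heq : (fun k => ∑ j ∈ Finset.range N,
        (c j * (((ρ * t : ℝ) : ℂ) * ω ^ j) ^ k) • a k)
        = (fun k => (∑ j ∈ Finset.range N, c j * (((ρ * t : ℝ) : ℂ) * ω ^ j) ^ k) • a k) := by
      funext k
      rw [Finset.sum_smul]
    rw [← heq]
    exact h
  set E : ℕ → ℂ := fun k =>
    (r : ℂ) ^ k - ∑ j ∈ Finset.range N, c j * (((ρ * t : ℝ) : ℂ) * ω ^ j) ^ k with hE'
  have H3 : HasSum (fun k => E k • a k)
      (φ (r : ℂ) - ∑ j ∈ Finset.range N, c j • φ (((ρ * t : ℝ) : ℂ) * ω ^ j)) := by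
    have h := Hr.sub HT
    have heq : (fun k => E k • a k) = (fun k => ((r : ℂ) ^ k • a k) -
        (∑ j ∈ Finset.range N, c j * (((ρ * t : ℝ) : ℂ) * ω ^ j) ^ k) • a k) := by
      funext k
      rw [hE', sub_smul]
    rw [heq]
    exact h
  have hreal : (ρ * t) * (r / (ρ * t)) = r := by field_simp
  have hE : ∀ k, E k = (r : ℂ) ^ k - ((ρ * t : ℝ) : ℂ) ^ k * d (k % N) := by
    intro k
    have h1 : E k = (r : ℂ) ^ k - ∑ j ∈ Finset.range N, c j * (((ρ * t : ℝ) : ℂ) * ω ^ j) ^ k := rfl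
    rw [h1, ← horth k, Finset.mul_sum]
    congr 1
    apply Finset.sum_congr rfl
    intro j _
    ring
  have hE0 : ∀ k, k ≤ n → E k = 0 := by
    intro k hk
    rw [hE k, Nat.mod_eq_of_lt (by omega : k < N)]
    have hstep : ((ρ * t : ℝ) : ℂ) ^ k * d k = (r : ℂ) ^ k := by
      rw [hdd', ← mul_pow, ← Complex.ofReal_mul, hreal]
    rw [hstep, sub_self]
  have hEb : ∀ k, n < k → ‖E k‖ ≤ 2 * ρ ^ k := by
    intro k hk
    rw [hE k]
    have h1 : ‖(r : ℂ) ^ k‖ = r ^ k := by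
      rw [norm_pow, Complex.norm_real, Real.norm_eq_abs, abs_of_pos hr]
    have h2 : ‖((ρ * t : ℝ) : ℂ) ^ k * d (k % N)‖ = (ρ * t) ^ k * (r / (ρ * t)) ^ (k % N) := by
      rw [hdd', norm_mul, norm_pow, norm_pow, Complex.norm_real, Complex.norm_real,
        Real.norm_eq_abs, Real.norm_eq_abs, abs_of_pos hρt, abs_of_pos (div_pos hr hρt)]
    have hle : (ρ * t) ^ k * (r / (ρ * t)) ^ (k % N) ≤ ρ ^ k := by
      set l := k % N with hl
      have hlk : l ≤ k := Nat.mod_le k N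
      have hkey : (ρ * t) ^ k * (r / (ρ * t)) ^ l = (ρ * t) ^ (k - l) * r ^ l := by
        have hsplit : (ρ * t) ^ k = (ρ * t) ^ (k - l) * (ρ * t) ^ l := by
          rw [← pow_add]
          congr 1
          omega
        rw [hsplit, mul_assoc, ← mul_pow, hreal]
      rw [hkey]
      have hb1 : (ρ * t) ^ (k - l) ≤ ρ ^ (k - l) := by
        apply pow_le_pow_left₀ (by positivity)
        nlinarith
      have hb2 : r ^ l ≤ ρ ^ l := pow_le_pow_left₀ hr.le hrρ.le _
      calc (ρ * t) ^ (k - l) * r ^ l ≤ ρ ^ (k - l) * ρ ^ l := by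
            apply mul_le_mul hb1 hb2 (by positivity) (by positivity)
      _ = ρ ^ k := by
          rw [← pow_add]
          congr 1
          omega
    calc ‖(r : ℂ) ^ k - ((ρ * t : ℝ) : ℂ) ^ k * d (k % N)‖
        ≤ ‖(r : ℂ) ^ k‖ + ‖((ρ * t : ℝ) : ℂ) ^ k * d (k % N)‖ := norm_sub_le _ _
    _ = r ^ k + (ρ * t) ^ k * (r / (ρ * t)) ^ (k % N) := by rw [h1, h2]
    _ ≤ ρ ^ k + ρ ^ k := by
        have : r ^ k ≤ ρ ^ k := pow_le_pow_left₀ hr.le hrρ.le _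
        linarith
    _ = 2 * ρ ^ k := by ring
  -- final estimate
  set q := ρ / ρ' with hq
  have hq0 : 0 ≤ q := by positivity
  have hq1 : q < 1 := by rw [hq, div_lt_one hρ'0]; exact hρρ'
  set u : ℕ → ℝ := fun k => if k ≤ n then 0 else 2 * M * q ^ k with hu
  have hbound : ∀ k, ‖E k • a k‖ ≤ u k := by
    intro k
    simp only [hu]
    by_cases hk : k ≤ n
    · rw [if_pos hk, hE0 k hk, zero_smul, norm_zero]
    · rw [if_neg hk]
      push_neg at hk
      rw [norm_smul]
      calc ‖E k‖ * ‖a k‖ ≤ (2 * ρ ^ k) * (M / ρ' ^ k) := by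
            apply mul_le_mul (hEb k hk) (hcoef k) (norm_nonneg _) (by positivity)
      _ = 2 * M * q ^ k := by
          rw [hq, div_pow]
          field_simp
  have husum : Summable u := by
    apply Summable.of_nonneg_of_le _ _ ((summable_geometric_of_lt_one hq0 hq1).mul_left (2 * M))
    · intro k
      simp only [hu]
      by_cases hk : k ≤ n
      · rw [if_pos hk]
      · rw [if_neg hk]
        positivity
    · intro k
      simp only [hu]
      by_cases hk : k ≤ n
      · rw [if_pos hk]
        positivity
      · rw [if_neg hk]
  have hsummable : Summable (fun k => ‖E k • a k‖) :=
    Summable.of_nonneg_of_le (fun k => norm_nonneg _) hbound husum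
  have hval : φ (r : ℂ) - (∑ j ∈ Finset.range N, c j • φ (((ρ * t : ℝ) : ℂ) * ω ^ j))
      = ∑' k, E k • a k := (H3.tsum_eq).symm
  rw [hval]
  calc ‖∑' k, E k • a k‖ ≤ ∑' k, ‖E k • a k‖ := norm_tsum_le_tsum_norm hsummable
  _ ≤ ∑' k, u k := Summable.tsum_le_tsum hbound hsummable husum
  _ = ∑ i ∈ Finset.range N, u i + ∑' k, u (k + N) := (Summable.sum_add_tsum_nat_add N husum).symm
  _ = ∑' k, u (k + N) := by
      have hzero : ∑ i ∈ Finset.range N, u i = 0 := by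
        apply Finset.sum_eq_zero
        intro i hi
        rw [Finset.mem_range] at hi
        simp only [hu]
        rw [if_pos (by omega : i ≤ n)]
      rw [hzero, zero_add]
  _ = ∑' k : ℕ, (2 * M * q ^ N) * q ^ k := by
      apply tsum_congr
      intro k
      simp only [hu]
      rw [if_neg (by omega : ¬ k + N ≤ n), pow_add]
      ring
  _ = (2 * M * q ^ N) * (1 - q)⁻¹ := by
      rw [tsum_mul_left, tsum_geometric_of_lt_one hq0 hq1]
  _ = 2 * M * (ρ / ρ') ^ (n + 1) / (1 - ρ / ρ') := by
      rw [hq, hN]; ring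

end Key

theorem stmt5 {X W : Type*}
    [NormedAddCommGroup X] [NormedSpace ℂ X] [CompleteSpace X]
    [NormedAddCommGroup W] [NormedSpace ℂ W] [CompleteSpace W]
    (s s₀ : ℝ) (hs : 0 < s) (hss₀ : s ≤ s₀) (hs₀ : s₀ ≤ 1)
    (hyp : ∀ g : X → W, MemAu g → ∀ ε : ℝ, 0 < ε →
      ∃ f : X → W, MemAu f ∧
        (∃ x₀ : X, ‖x₀‖ ≤ s ∧ ‖f x₀‖ = supOnBall s f) ∧
        supOnBall s₀ (fun x => g x - f x) < ε) :
    ∀ g : X → W, MemAu g → ∀ ε : ℝ, 0 < ε →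
      ∃ h : X → W, MemAu h ∧
        (∃ x₀ : X, ‖x₀‖ ≤ 1 ∧ ‖h x₀‖ = supOnBall 1 h) ∧
        supOnBall 1 (fun x => g x - h x) < ε := by
  intro g hg ε hε
  obtain ⟨hgd, hgc⟩ := hg
  have hs1 : s ≤ 1 := le_trans hss₀ hs₀
  obtain ⟨M, hM0, hM⟩ := aux_bounded hgc
  -- uniform continuity: dilation by r close to 1
  have hgc' := hgc
  rw [Metric.uniformContinuousOn_iff] at hgc'
  obtain ⟨δ, hδ, Hδ⟩ := hgc' (ε / 4) (by linarith)
  set r : ℝ := max (1 - δ / 2) (1 / 2) with hrdef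
  have hr0 : 0 < r := lt_of_lt_of_le (by norm_num) (le_max_right _ _)
  have hr1 : r < 1 := by
    apply max_lt
    · linarith
    · norm_num
  have hgr : ∀ x ∈ closedBall (0 : X) 1, ‖g x - g ((r : ℂ) • x)‖ ≤ ε / 4 := by
    intro x hx
    have hx' : ‖x‖ ≤ 1 := by rwa [mem_closedBall, dist_zero_right] at hx
    have hmem : (r : ℂ) • x ∈ closedBall (0 : X) 1 := by
      rw [mem_closedBall, dist_zero_right, norm_smul, Complex.norm_real,
        Real.norm_eq_abs, abs_of_pos hr0]
      nlinarith
    have hd2 : dist x ((r : ℂ) • x) < δ := by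
      rw [dist_eq_norm]
      have heq : x - (r : ℂ) • x = ((1 - r : ℝ) : ℂ) • x := by
        push_cast
        rw [sub_smul, one_smul]
      rw [heq, norm_smul, Complex.norm_real, Real.norm_eq_abs,
        abs_of_nonneg (by linarith : (0:ℝ) ≤ 1 - r)]
      have hrge : 1 - δ / 2 ≤ r := le_max_left _ _
      nlinarith
    have hdist := Hδ x hx _ hmem hd2
    rw [dist_eq_norm] at hdist
    exact hdist.le
  -- radii
  set ρ : ℝ := (1 + 3 * r) / 4 with hρdef
  set ρ' : ℝ := (1 + r) / 2 with hρ'def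
  have hrρ : r < ρ := by rw [hρdef]; linarith
  have hρρ' : ρ < ρ' := by rw [hρdef, hρ'def]; linarith
  have hρ'1 : ρ' < 1 := by rw [hρ'def]; linarith
  have hρ0 : 0 < ρ := lt_trans hr0 hrρ
  have hρ'0 : 0 < ρ' := lt_trans hρ0 hρρ'
  have hq1 : ρ / ρ' < 1 := by rw [div_lt_one hρ'0]; exact hρρ'
  have hq0 : 0 ≤ ρ / ρ' := by positivity
  have h1q : 0 < 1 - ρ / ρ' := by linarith
  -- choose n
  obtain ⟨n, hn⟩ := exists_pow_lt_of_lt_one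
    (show (0:ℝ) < ε * (1 - ρ / ρ') / (8 * M + 8) by positivity) hq1
  have hqn : 2 * M * (ρ / ρ') ^ (n + 1) / (1 - ρ / ρ') ≤ ε / 4 := by
    rw [div_le_iff₀ h1q]
    have h1 : (ρ / ρ') ^ (n + 1) ≤ (ρ / ρ') ^ n :=
      pow_le_pow_of_le_one hq0 hq1.le (by omega)
    have h2 : 2 * M * (ρ / ρ') ^ (n + 1) ≤ 2 * M * (ρ / ρ') ^ n := by nlinarith
    have h3 : 2 * M * (ρ / ρ') ^ n ≤ 2 * M * (ε * (1 - ρ / ρ') / (8 * M + 8)) := by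
      nlinarith [hn, pow_nonneg hq0 n]
    have h4 : 2 * M * (ε * (1 - ρ / ρ') / (8 * M + 8)) ≤ ε / 4 * (1 - ρ / ρ') := by
      have hrw : 2 * M * (ε * (1 - ρ / ρ') / (8 * M + 8))
          = (ε * (1 - ρ / ρ')) * (2 * M / (8 * M + 8)) := by ring
      have hfrac : 2 * M / (8 * M + 8) ≤ 1 / 4 := by
        rw [div_le_iff₀ (by linarith)]
        linarith
      rw [hrw]
      calc (ε * (1 - ρ / ρ')) * (2 * M / (8 * M + 8)) ≤ (ε * (1 - ρ / ρ')) * (1 / 4) := by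
            apply mul_le_mul_of_nonneg_left hfrac (by positivity)
      _ = ε / 4 * (1 - ρ / ρ') := by ring
    linarith
  -- the approximating function Gd
  set ω : ℂ := Complex.exp (2 * Real.pi * Complex.I / ((n : ℂ) + 1)) with hωdef
  set c : ℕ → ℂ := fun j => ((n : ℂ) + 1)⁻¹ *
      ∑ l ∈ Finset.range (n + 1), ((r / (ρ * s) : ℝ) : ℂ) ^ l * ((ω⁻¹) ^ l) ^ j with hcdef
  set Gd : X → W := fun y =>
    ∑ j ∈ Finset.range (n + 1), c j • g ((((ρ : ℝ) : ℂ) * ω ^ j) • y) with hGddef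
  have hωabs : ‖ω‖ = 1 := by
    rw [hωdef]
    have hcast : (2 * (Real.pi : ℂ) * Complex.I / ((n : ℂ) + 1)) =
        ((2 * Real.pi / (n + 1) : ℝ) : ℂ) * Complex.I := by push_cast; ring
    rw [hcast, Complex.norm_exp_ofReal_mul_I]
  have henorm : ∀ j : ℕ, ‖((ρ : ℝ) : ℂ) * ω ^ j‖ = ρ := by
    intro j
    rw [norm_mul, norm_pow, hωabs, one_pow, mul_one, Complex.norm_real,
      Real.norm_eq_abs, abs_of_pos hρ0]
  have hGdAu : MemAu Gd := by
    refine ⟨?_, ?_⟩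
    · rw [hGddef]
      apply DifferentiableOn.fun_sum
      intro j _
      apply DifferentiableOn.const_smul
      have hinner : DifferentiableOn ℂ
          (fun y : X => (((ρ : ℝ) : ℂ) * ω ^ j) • y) (ball (0 : X) 1) :=
        (differentiable_id.const_smul _).differentiableOn
      apply hgd.comp hinner
      intro y hy
      rw [mem_ball, dist_zero_right] at hy ⊢
      rw [norm_smul, henorm j]
      nlinarith [norm_nonneg y]
    · rw [hGddef]
      apply aux_ucOn_sum
      intro j _
      apply aux_ucOn_const_smul
      apply aux_ucOn_comp_smul hgc
      rw [henorm j]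
      linarith
  -- key pointwise estimate
  have hkey : ∀ x ∈ closedBall (0 : X) 1,
      ‖g ((r : ℂ) • x) - Gd ((s : ℂ) • x)‖ ≤ 2 * M * (ρ / ρ') ^ (n + 1) / (1 - ρ / ρ') := by
    intro x hx
    have hx' : ‖x‖ ≤ 1 := by rwa [mem_closedBall, dist_zero_right] at hx
    have hφd : DifferentiableOn ℂ (fun μ : ℂ => g (μ • x)) (closedBall (0 : ℂ) ρ') := by
      have hinner : DifferentiableOn ℂ (fun μ : ℂ => μ • x) (closedBall (0 : ℂ) ρ') :=
        (differentiable_id.smul_const x).differentiableOn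
      apply hgd.comp hinner
      intro μ hμ
      rw [mem_closedBall, dist_zero_right] at hμ
      rw [mem_ball, dist_zero_right, norm_smul]
      nlinarith [norm_nonneg μ, norm_nonneg x]
    have hφM : ∀ μ : ℂ, ‖μ‖ ≤ ρ' → ‖g (μ • x)‖ ≤ M := by
      intro μ hμ
      apply hM
      rw [mem_closedBall, dist_zero_right, norm_smul]
      nlinarith [norm_nonneg μ, norm_nonneg x]
    have hk := key1 (φ := fun μ : ℂ => g (μ • x)) n hφd hφM hr0 hrρ hρρ' hρ'1 hs hs1
      ω hωdef c (fun j => by rw [hcdef])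
    have hGdeq : Gd ((s : ℂ) • x)
        = ∑ j ∈ Finset.range (n + 1), c j • g (((((ρ * s : ℝ)) : ℂ) * ω ^ j) • x) := by
      rw [hGddef]
      apply Finset.sum_congr rfl
      intro j _
      congr 1
      rw [smul_smul]
      congr 1
      push_cast
      ring
    rw [hGdeq]
    exact hk
  -- apply the hypothesis to Gd
  obtain ⟨f, hfAu, ⟨x₀, hx₀s, hatt⟩, hclose⟩ := hyp Gd hGdAu (ε / 4) (by linarith)
  set h : X → W := fun x => f ((s : ℂ) • x) with hhdef
  have hsnorm : ‖(s : ℂ)‖ = s := by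
    rw [Complex.norm_real, Real.norm_eq_abs, abs_of_pos hs]
  have hsne : (s : ℂ) ≠ 0 := by
    intro hc0
    rw [hc0] at hsnorm
    rw [norm_zero] at hsnorm
    linarith
  refine ⟨h, ⟨?_, ?_⟩, ⟨(s : ℂ)⁻¹ • x₀, ?_, ?_⟩, ?_⟩
  · rw [hhdef]
    have hinner : DifferentiableOn ℂ (fun y : X => (s : ℂ) • y) (ball (0 : X) 1) :=
      (differentiable_id.const_smul _).differentiableOn
    apply hfAu.1.comp hinner
    intro y hy
    rw [mem_ball, dist_zero_right] at hy ⊢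
    rw [norm_smul, hsnorm]
    nlinarith [norm_nonneg y]
  · rw [hhdef]
    apply aux_ucOn_comp_smul hfAu.2
    rw [hsnorm]
    exact hs1
  · rw [norm_smul, norm_inv, hsnorm]
    have hstep : s⁻¹ * ‖x₀‖ ≤ s⁻¹ * s :=
      mul_le_mul_of_nonneg_left hx₀s (by positivity)
    rw [inv_mul_cancel₀ hs.ne'] at hstep
    exact hstep
  · have hhx : h ((s : ℂ)⁻¹ • x₀) = f x₀ := by
      rw [hhdef]
      simp only
      rw [smul_smul, mul_inv_cancel₀ hsne, one_smul]
    rw [hhx, hatt, hhdef]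
    exact (aux_sup_dilate hs).symm
  · obtain ⟨Mg, hMg0, hMg⟩ := aux_bounded hGdAu.2
    obtain ⟨Mf, hMf0, hMf⟩ := aux_bounded hfAu.2
    have hSptwise : ∀ y ∈ closedBall (0 : X) s₀, ‖Gd y - f y‖ ≤ Mg + Mf := by
      intro y hy
      have hy1 : y ∈ closedBall (0 : X) 1 := closedBall_subset_closedBall hs₀ hy
      calc ‖Gd y - f y‖ ≤ ‖Gd y‖ + ‖f y‖ := norm_sub_le _ _
      _ ≤ Mg + Mf := add_le_add (hMg y hy1) (hMf y hy1)
    have hfinal : ∀ x ∈ closedBall (0 : X) 1,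
        ‖g x - h x‖ ≤ ε / 4 + ε / 4 + supOnBall s₀ (fun y => Gd y - f y) := by
      intro x hx
      have hx' : ‖x‖ ≤ 1 := by rwa [mem_closedBall, dist_zero_right] at hx
      have hsx : (s : ℂ) • x ∈ closedBall (0 : X) s₀ := by
        rw [mem_closedBall, dist_zero_right, norm_smul, hsnorm]
        nlinarith [norm_nonneg x]
      have h3 : ‖Gd ((s : ℂ) • x) - f ((s : ℂ) • x)‖ ≤
          supOnBall s₀ (fun y => Gd y - f y) :=
        aux_le_sup hSptwise hsx
      have h2 : ‖g ((r : ℂ) • x) - Gd ((s : ℂ) • x)‖ ≤ ε / 4 :=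
        le_trans (hkey x hx) hqn
      have h1 := hgr x hx
      calc ‖g x - h x‖
          = ‖(g x - g ((r : ℂ) • x)) + ((g ((r : ℂ) • x) - Gd ((s : ℂ) • x)) +
            (Gd ((s : ℂ) • x) - f ((s : ℂ) • x)))‖ := by
            rw [hhdef]
            congr 1
            abel
      _ ≤ ‖g x - g ((r : ℂ) • x)‖ + (‖g ((r : ℂ) • x) - Gd ((s : ℂ) • x)‖ +
            ‖Gd ((s : ℂ) • x) - f ((s : ℂ) • x)‖) :=
            le_trans (norm_add_le _ _) (by gcongr; exact norm_add_le _ _)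
      _ ≤ ε / 4 + (ε / 4 + supOnBall s₀ (fun y => Gd y - f y)) :=
            add_le_add h1 (add_le_add h2 h3)
      _ = ε / 4 + ε / 4 + supOnBall s₀ (fun y => Gd y - f y) := by ring
    have hS0 : 0 ≤ supOnBall s₀ (fun y => Gd y - f y) := aux_sup_nonneg
    have hsup := aux_sup_le (by linarith) hfinal
    have hcl : supOnBall s₀ (fun y => Gd y - f y) < ε / 4 := hclose
    calc supOnBall 1 (fun x => g x - h x)
        ≤ ε / 4 + ε / 4 + supOnBall s₀ (fun y => Gd y - f y) := hsup
    _ < ε := by linarith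
end

section
/- Fix 𝕜 = ℝ or ℂ and natural numbers 1 ≤ j ≤ k. There exists a constant C > 0 (depending only on j and k) such that for all Banach spaces X and Y over 𝕜, every continuous polynomial P : X → Y of degree at most k, every x with ‖x‖ ≤ 1, and every y with ‖y‖ ≤ 1, one has (1/j!)·‖D^j P(x)(y,…,y)‖ ≤ C · sup_{‖z‖≤1} ‖P(z)‖, where D^j P(x) denotes the j-th Fréchet derivative of P at x. -/
open Metric Filter

open Finset

section Vand
variable {𝕜 : Type*} [Field 𝕜] {Y : Type*} [AddCommGroup Y] [Module 𝕜 Y]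

lemma vand_extract {N : ℕ} (u : Fin N → 𝕜) (hu : Function.Injective u)
    (c : Fin N → Y) (m : Fin N) :
    ∑ a, (Matrix.vandermonde u)⁻¹ m a • (∑ b : Fin N, u a ^ (b : ℕ) • c b) = c m := by
  have hdet : IsUnit (Matrix.vandermonde u).det :=
    isUnit_iff_ne_zero.2 (Matrix.det_vandermonde_ne_zero_iff.2 hu)
  have hinv : (Matrix.vandermonde u)⁻¹ * Matrix.vandermonde u = 1 :=
    Matrix.nonsing_inv_mul _ hdet
  calc ∑ a, (Matrix.vandermonde u)⁻¹ m a • (∑ b : Fin N, u a ^ (b : ℕ) • c b)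
      = ∑ a, ∑ b : Fin N, ((Matrix.vandermonde u)⁻¹ m a * Matrix.vandermonde u a b) • c b := by
        simp [Finset.smul_sum, mul_smul, Matrix.vandermonde]
    _ = ∑ b, (∑ a, (Matrix.vandermonde u)⁻¹ m a * Matrix.vandermonde u a b) • c b := by
        rw [Finset.sum_comm]; simp [Finset.sum_smul]
    _ = c m := by
        have : ∀ b, (∑ a, (Matrix.vandermonde u)⁻¹ m a * Matrix.vandermonde u a b)
            = (1 : Matrix (Fin N) (Fin N) 𝕜) m b := by
          intro b; rw [← hinv, Matrix.mul_apply]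
        simp only [this, Matrix.one_apply]
        simp
end Vand

open Finset

section PolyQ
variable {𝕜 : Type*} [RCLike 𝕜] {X Y : Type*} [NormedAddCommGroup X] [NormedSpace 𝕜 X]
  [NormedAddCommGroup Y] [NormedSpace 𝕜 Y]
variable (k : ℕ) (M : ∀ n : ℕ, ContinuousMultilinearMap 𝕜 (fun _ : Fin n => X) Y)

/-- Taylor "series" (finitely supported) of the polynomial at `z`. -/
noncomputable def polyQ (z : X) (i : ℕ) : ContinuousMultilinearMap 𝕜 (fun _ : Fin i => X) Y :=
  ∑ n ∈ Finset.range (k + 1), ∑ S : Finset (Fin n),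
    if h : S.card = i then (M n).restr S h z else 0

lemma polyQ_apply_diag (z : X) (i : ℕ) (w : X) :
    polyQ k M z i (fun _ => w) =
      ∑ n ∈ Finset.range (k + 1), ∑ S : Finset (Fin n),
        if S.card = i then M n (fun j => if j ∈ S then w else z) else 0 := by
  rw [polyQ]
  rw [ContinuousMultilinearMap.sum_apply]
  refine Finset.sum_congr rfl fun n _ => ?_
  rw [ContinuousMultilinearMap.sum_apply]
  refine Finset.sum_congr rfl fun S _ => ?_
  by_cases h : S.card = i
  · simp only [h, dif_pos, if_pos]
    show (M n) (fun j : Fin n => if _ : j ∈ S then w else z) = _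
    exact congrArg _ (funext fun jj => by by_cases hj : jj ∈ S <;> simp [hj])
  · simp [h]

lemma polyQ_eq_zero (z : X) {i : ℕ} (hi : k + 1 ≤ i) : polyQ k M z i = 0 := by
  rw [polyQ]
  refine Finset.sum_eq_zero fun n hn => Finset.sum_eq_zero fun S _ => ?_
  rw [dif_neg]
  intro h
  have h1 : S.card ≤ n := by simpa using Finset.card_le_card (Finset.subset_univ S)
  have := Finset.mem_range.1 hn
  omega

lemma sum_polyQ (z h : X) :
    ∑ i ∈ Finset.range (k + 1), polyQ k M z i (fun _ => h)
      = ∑ n ∈ Finset.range (k + 1), M n (fun _ => z + h) := by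
  simp only [polyQ_apply_diag]
  rw [Finset.sum_comm]
  refine Finset.sum_congr rfl fun n hn => ?_
  rw [Finset.sum_comm]
  have key : ∀ S : Finset (Fin n),
      ∑ i ∈ Finset.range (k + 1),
        (if S.card = i then M n (fun j => if j ∈ S then h else z) else 0)
      = M n (fun j => if j ∈ S then h else z) := by
    intro S
    rw [Finset.sum_ite_eq]
    rw [if_pos]
    refine Finset.mem_range.2 ?_
    have h1 : S.card ≤ n := by simpa using Finset.card_le_card (Finset.subset_univ S)
    have := Finset.mem_range.1 hn
    omega
  rw [Finset.sum_congr rfl fun S _ => key S]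
  have := (M n).toMultilinearMap.map_add_univ (fun _ => h) (fun _ => z)
  have h2 : ((fun _ : Fin n => h) + fun _ => z) = fun _ : Fin n => z + h := by
    funext; simp [add_comm]
  rw [h2] at this
  have this' : ((M n) fun _ : Fin n => z + h)
      = ∑ s : Finset (Fin n), (M n) (s.piecewise (fun _ => h) (fun _ => z)) := this
  rw [this']
  refine Finset.sum_congr rfl fun S _ => congrArg _ (funext fun jj => ?_)
  by_cases hj : jj ∈ S <;> simp [Finset.piecewise, hj]

lemma hasFPowerSeriesOnBall_poly (z : X) :
    HasFPowerSeriesOnBall (fun w => ∑ n ∈ Finset.range (k + 1), M n (fun _ => w))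
      (fun i => polyQ k M z i) z ⊤ := by
  refine ⟨?_, by simp, ?_⟩
  · rw [FormalMultilinearSeries.radius_eq_top_of_forall_image_add_eq_zero _ (k + 1)
      fun m => polyQ_eq_zero k M z (by omega)]
  · intro w _
    have : HasSum (fun i => polyQ k M z i (fun _ => w))
        (∑ i ∈ Finset.range (k + 1), polyQ k M z i (fun _ => w)) := by
      refine hasSum_sum_of_ne_finset_zero fun i hi => ?_
      rw [polyQ_eq_zero k M z (by have := Finset.mem_range.not.1 hi; omega)]
      · simp
    rw [sum_polyQ] at this
    exact this

end PolyQ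
section PolyD
variable {𝕜 : Type*} [RCLike 𝕜] {X Y : Type*} [NormedAddCommGroup X] [NormedSpace 𝕜 X]
  [NormedAddCommGroup Y] [NormedSpace 𝕜 Y]
variable (k : ℕ) (M : ∀ n : ℕ, ContinuousMultilinearMap 𝕜 (fun _ : Fin n => X) Y)

noncomputable def polyD (x y : X) (a b : ℕ) : Y :=
  ∑ n ∈ Finset.range (k + 1), ∑ S : Finset (Fin n),
    if n - S.card = a ∧ S.card = b then M n (fun j => if j ∈ S then y else x) else 0

-- the basic scalar-splitting computation
lemma M_scaled (x y : X) (s t : 𝕜) (n : ℕ) (S : Finset (Fin n)) :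
    M n (fun j => if j ∈ S then t • y else s • x)
      = (s ^ (n - S.card) * t ^ S.card) • M n (fun j => if j ∈ S then y else x) := by
  have h1 : (fun j => if j ∈ S then t • y else s • x)
      = fun j : Fin n => (if j ∈ S then t else s) • (if j ∈ S then y else x) := by
    funext jj; by_cases hj : jj ∈ S <;> simp [hj]
  rw [h1]
  have h2 : ((M n) fun j : Fin n => (if j ∈ S then t else s) • if j ∈ S then y else x)
      = (∏ j : Fin n, if j ∈ S then t else s) • (M n) fun j => if j ∈ S then y else x :=
    (M n).toMultilinearMap.map_smul_univ _ _
  rw [h2]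
  congr 1
  rw [Finset.prod_ite (f := fun _ => t) (g := fun _ => s), Finset.prod_const, Finset.prod_const]
  have e1 : Finset.univ.filter (fun j : Fin n => j ∈ S) = S := by
    ext jj; simp
  have e2 : (Finset.univ.filter (fun j : Fin n => ¬ j ∈ S)).card = n - S.card := by
    have : Finset.univ.filter (fun j : Fin n => ¬ j ∈ S) = Sᶜ := by ext jj; simp
    rw [this, Finset.card_compl]
    simp
  rw [e1, e2, mul_comm]
end PolyD

section Expand
variable {𝕜 : Type*} [RCLike 𝕜] {X Y : Type*} [NormedAddCommGroup X] [NormedSpace 𝕜 X]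
  [NormedAddCommGroup Y] [NormedSpace 𝕜 Y]
variable (k : ℕ) (M : ∀ n : ℕ, ContinuousMultilinearMap 𝕜 (fun _ : Fin n => X) Y)

lemma polyQ_scaled_diag (x y : X) (s t : 𝕜) (b : ℕ) :
    polyQ k M (s • x) b (fun _ => t • y)
      = ∑ a ∈ Finset.range (k + 1), (s ^ a * t ^ b) • polyD k M x y a b := by
  rw [polyQ_apply_diag]
  have rhs : ∑ a ∈ Finset.range (k + 1), (s ^ a * t ^ b) • polyD k M x y a b
      = ∑ n ∈ Finset.range (k + 1), ∑ S : Finset (Fin n), ∑ a ∈ Finset.range (k + 1),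
          (s ^ a * t ^ b) •
            (if n - S.card = a ∧ S.card = b then M n (fun j => if j ∈ S then y else x) else 0) := by
    simp only [polyD, Finset.smul_sum]
    rw [Finset.sum_comm]
    exact Finset.sum_congr rfl fun n _ => Finset.sum_comm
  rw [rhs]
  refine Finset.sum_congr rfl fun n hn => ?_
  refine Finset.sum_congr rfl fun S _ => ?_
  rw [M_scaled]
  by_cases hb : S.card = b
  · rw [if_pos hb]
    have : ∀ a, (s ^ a * t ^ b) •
        (if n - S.card = a ∧ S.card = b then M n (fun j => if j ∈ S then y else x) else 0)
        = (if n - S.card = a then (s ^ a * t ^ b) • M n (fun j => if j ∈ S then y else x) else 0) := by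
      intro a
      by_cases ha : n - S.card = a <;> simp [ha, hb]
    rw [Finset.sum_congr rfl fun a _ => this a]
    rw [Finset.sum_ite_eq, if_pos]
    · rw [hb]
    · exact Finset.mem_range.2 (by have := Finset.mem_range.1 hn; omega)
  · rw [if_neg hb]
    refine (Finset.sum_eq_zero fun a _ => ?_).symm
    simp [hb]

lemma P_nodes (x y : X) (s t : 𝕜) :
    ∑ n ∈ Finset.range (k + 1), M n (fun _ => s • x + t • y)
      = ∑ b ∈ Finset.range (k + 1),
          t ^ b • (∑ a ∈ Finset.range (k + 1), s ^ a • polyD k M x y a b) := by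
  rw [← sum_polyQ k M (s • x) (t • y)]
  refine Finset.sum_congr rfl fun b _ => ?_
  rw [polyQ_scaled_diag, Finset.smul_sum]
  refine Finset.sum_congr rfl fun a _ => ?_
  rw [mul_comm, mul_smul]

lemma polyQ_diag_eq (x y : X) (b : ℕ) :
    polyQ k M x b (fun _ => y) = ∑ a ∈ Finset.range (k + 1), polyD k M x y a b := by
  have h := polyQ_scaled_diag k M x y 1 1 b
  simpa using h
end Expand

theorem stmt7 (𝕜 : Type*) [RCLike 𝕜] (j k : ℕ) (hj : 1 ≤ j) (hjk : j ≤ k) :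
    ∃ C : ℝ, 0 < C ∧
      ∀ (X Y : Type) (_ : NormedAddCommGroup X) (_ : NormedSpace 𝕜 X)
        (_ : NormedAddCommGroup Y) (_ : NormedSpace 𝕜 Y)
        (_ : CompleteSpace X) (_ : CompleteSpace Y)
        (P : X → Y), IsPolyDegLE 𝕜 k P →
        ∀ x : X, ‖x‖ ≤ 1 → ∀ y : X, ‖y‖ ≤ 1 →
          (1 / (j.factorial : ℝ)) * ‖iteratedFDeriv 𝕜 j P x (fun _ => y)‖
            ≤ C * supOnBall 1 P := by
  classical
  set u : Fin (k + 1) → 𝕜 := fun a => (RCLike.ofReal ((a : ℝ) / (2 * k + 2)) : 𝕜) with hu_def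
  have hden : (0 : ℝ) < 2 * k + 2 := by positivity
  have hu : Function.Injective u := by
    intro a b hab
    simp only [hu_def] at hab
    have h1 : ((a : ℝ) / (2 * k + 2)) = ((b : ℝ) / (2 * k + 2)) := RCLike.ofReal_injective hab
    have h2 : (a : ℝ) = (b : ℝ) := by field_simp at h1; exact_mod_cast h1
    exact Fin.ext (by exact_mod_cast h2)
  have hnormu : ∀ a : Fin (k + 1), ‖u a‖ ≤ 1 / 2 := by
    intro a
    have ha : (a : ℝ) ≤ k := by exact_mod_cast Nat.lt_succ_iff.1 a.isLt
    have ha0 : (0 : ℝ) ≤ (a : ℝ) := by positivity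
    simp only [hu_def, RCLike.norm_ofReal]
    rw [abs_of_nonneg (by positivity), div_le_iff₀ hden]
    nlinarith
  set W : Matrix (Fin (k + 1)) (Fin (k + 1)) 𝕜 := (Matrix.vandermonde u)⁻¹ with hW_def
  have hjf : j < k + 1 := by omega
  set jf : Fin (k + 1) := ⟨j, hjf⟩ with hjf_def
  set A : ℝ := ∑ a' : Fin (k + 1), ∑ a : Fin (k + 1), ‖W a' a‖ with hA_def
  set B : ℝ := ∑ bb : Fin (k + 1), ‖W jf bb‖ with hB_def
  have hA0 : 0 ≤ A := Finset.sum_nonneg fun _ _ => Finset.sum_nonneg fun _ _ => norm_nonneg _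
  have hB0 : 0 ≤ B := Finset.sum_nonneg fun _ _ => norm_nonneg _
  have hAB : (0:ℝ) < A * B + 1 := by nlinarith
  refine ⟨A * B + 1, hAB, ?_⟩
  intro X Y nX sX nY sY cX cY P hPoly x hx y hy
  letI := nX; letI := sX; letI := nY; letI := sY; letI := cX; letI := cY
  obtain ⟨Pc, hhom, hsum⟩ := hPoly
  have hex : ∀ n : ℕ, ∃ Mn : ContinuousMultilinearMap 𝕜 (fun _ : Fin n => X) Y,
      n ≤ k → ∀ z, Pc n z = Mn (fun _ => z) := by
    intro n
    by_cases h : n ≤ k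
    · obtain ⟨Mn, hMn⟩ := hhom n h; exact ⟨Mn, fun _ => hMn⟩
    · exact ⟨0, fun h' => absurd h' h⟩
  choose M hMe using hex
  have hPfun : P = fun z => ∑ n ∈ Finset.range (k + 1), M n (fun _ : Fin n => z) := by
    funext z
    rw [hsum z]
    exact Finset.sum_congr rfl fun n hn =>
      hMe n (Nat.lt_succ_iff.1 (Finset.mem_range.1 hn)) z
  rw [hPfun]
  set Pm : X → Y := fun z => ∑ n ∈ Finset.range (k + 1), M n (fun _ : Fin n => z) with hPm_def
  have hps : HasFPowerSeriesOnBall Pm (fun i => polyQ k M x i) x ⊤ :=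
    hasFPowerSeriesOnBall_poly k M x
  have hfact := hps.factorial_smul y j
  have hbdd : BddAbove ((fun z => ‖Pm z‖) '' Metric.closedBall (0 : X) 1) := by
    refine ⟨∑ n ∈ Finset.range (k + 1), ‖M n‖, ?_⟩
    rintro r ⟨z, hz, rfl⟩
    have hz1 : ‖z‖ ≤ 1 := by simpa [Metric.mem_closedBall, dist_zero_right] using hz
    calc ‖Pm z‖ ≤ ∑ n ∈ Finset.range (k + 1), ‖M n (fun _ : Fin n => z)‖ := norm_sum_le _ _
      _ ≤ ∑ n ∈ Finset.range (k + 1), ‖M n‖ := by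
          refine Finset.sum_le_sum fun n _ => ?_
          have h1 := (M n).le_opNorm (fun _ : Fin n => z)
          have h2 : ∏ _i : Fin n, ‖z‖ = ‖z‖ ^ n := by simp
          rw [h2] at h1
          have h3 : ‖z‖ ^ n ≤ 1 := pow_le_one₀ (norm_nonneg z) hz1
          nlinarith [norm_nonneg (M n)]
  have hmem : ∀ z : X, ‖z‖ ≤ 1 → ‖Pm z‖ ≤ supOnBall 1 Pm := by
    intro z hz
    exact le_csSup hbdd ⟨z, by simpa [Metric.mem_closedBall, dist_zero_right] using hz, rfl⟩
  have hS0 : 0 ≤ supOnBall 1 Pm := le_trans (norm_nonneg (Pm 0)) (hmem 0 (by simp))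
  have hnode : ∀ a b : Fin (k + 1), ‖u a • x + u b • y‖ ≤ 1 := by
    intro a b
    have h1 : ‖u a • x + u b • y‖ ≤ ‖u a‖ * ‖x‖ + ‖u b‖ * ‖y‖ := by
      refine le_trans (norm_add_le _ _) ?_
      rw [norm_smul, norm_smul]
    have h2 := hnormu a; have h3 := hnormu b
    nlinarith [norm_nonneg (u a), norm_nonneg (u b), norm_nonneg x, norm_nonneg y]
  have hval : ∀ a b : Fin (k + 1), Pm (u a • x + u b • y)
      = ∑ b' : Fin (k + 1), u b ^ (b' : ℕ) •
          (∑ a' : Fin (k + 1), u a ^ (a' : ℕ) • polyD k M x y (a' : ℕ) (b' : ℕ)) := by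
    intro a b
    have h0 : Pm (u a • x + u b • y) = ∑ bn ∈ Finset.range (k + 1), (u b) ^ bn •
        (∑ an ∈ Finset.range (k + 1), (u a) ^ an • polyD k M x y an bn) :=
      P_nodes k M x y (u a) (u b)
    rw [h0, ← Fin.sum_univ_eq_sum_range (fun bn => (u b) ^ bn •
        (∑ an ∈ Finset.range (k + 1), (u a) ^ an • polyD k M x y an bn)) (k + 1)]
    refine Finset.sum_congr rfl fun b' _ => ?_
    congr 1
    exact (Fin.sum_univ_eq_sum_range
      (fun an => (u a) ^ an • polyD k M x y an (b' : ℕ)) (k + 1)).symm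
  have hg : ∀ a : Fin (k + 1),
      (∑ a' : Fin (k + 1), u a ^ (a' : ℕ) • polyD k M x y (a' : ℕ) j)
        = ∑ bb : Fin (k + 1), W jf bb • Pm (u a • x + u bb • y) := by
    intro a
    have h1 := vand_extract u hu (fun b' : Fin (k + 1) =>
      ∑ a' : Fin (k + 1), u a ^ (a' : ℕ) • polyD k M x y (a' : ℕ) (b' : ℕ)) jf
    have h2 : ∑ bb : Fin (k + 1), W jf bb • Pm (u a • x + u bb • y)
        = ∑ a' : Fin (k + 1), u a ^ (a' : ℕ) • polyD k M x y (a' : ℕ) ((jf : ℕ)) := by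
      rw [← h1]
      exact Finset.sum_congr rfl fun bb _ => by rw [hval a bb]
    rw [h2]
  have hd : ∀ a' : Fin (k + 1), polyD k M x y (a' : ℕ) j
      = ∑ a : Fin (k + 1), W a' a •
          (∑ bb : Fin (k + 1), W jf bb • Pm (u a • x + u bb • y)) := by
    intro a'
    have h1 := vand_extract u hu (fun a'' : Fin (k + 1) => polyD k M x y (a'' : ℕ) j) a'
    rw [← h1]
    exact Finset.sum_congr rfl fun a _ => by rw [← hg a]
  have hcj : polyQ k M x j (fun _ => y) = ∑ a' : Fin (k + 1), polyD k M x y (a' : ℕ) j := by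
    rw [polyQ_diag_eq k M x y j]
    exact (Fin.sum_univ_eq_sum_range (fun m => polyD k M x y m j) (k + 1)).symm
  have h1 : ∀ a : Fin (k + 1),
      ‖∑ bb : Fin (k + 1), W jf bb • Pm (u a • x + u bb • y)‖ ≤ B * supOnBall 1 Pm := by
    intro a
    calc ‖∑ bb : Fin (k + 1), W jf bb • Pm (u a • x + u bb • y)‖
        ≤ ∑ bb : Fin (k + 1), ‖W jf bb • Pm (u a • x + u bb • y)‖ := norm_sum_le _ _
      _ ≤ ∑ bb : Fin (k + 1), ‖W jf bb‖ * supOnBall 1 Pm := by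
          refine Finset.sum_le_sum fun bb _ => ?_
          rw [norm_smul]
          exact mul_le_mul_of_nonneg_left (hmem _ (hnode a bb)) (norm_nonneg _)
      _ = B * supOnBall 1 Pm := by rw [hB_def, Finset.sum_mul]
  have h2 : ∀ a' : Fin (k + 1), ‖polyD k M x y (a' : ℕ) j‖
      ≤ (∑ a : Fin (k + 1), ‖W a' a‖) * (B * supOnBall 1 Pm) := by
    intro a'
    rw [hd a']
    calc ‖∑ a : Fin (k + 1), W a' a •
            (∑ bb : Fin (k + 1), W jf bb • Pm (u a • x + u bb • y))‖
        ≤ ∑ a : Fin (k + 1), ‖W a' a •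
            (∑ bb : Fin (k + 1), W jf bb • Pm (u a • x + u bb • y))‖ := norm_sum_le _ _
      _ ≤ ∑ a : Fin (k + 1), ‖W a' a‖ * (B * supOnBall 1 Pm) := by
          refine Finset.sum_le_sum fun a _ => ?_
          rw [norm_smul]
          exact mul_le_mul_of_nonneg_left (h1 a) (norm_nonneg _)
      _ = (∑ a : Fin (k + 1), ‖W a' a‖) * (B * supOnBall 1 Pm) :=
          (Finset.sum_mul _ _ _).symm
  have h3 : ‖polyQ k M x j (fun _ => y)‖ ≤ A * B * supOnBall 1 Pm := by
    rw [hcj]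
    calc ‖∑ a' : Fin (k + 1), polyD k M x y (a' : ℕ) j‖
        ≤ ∑ a' : Fin (k + 1), ‖polyD k M x y (a' : ℕ) j‖ := norm_sum_le _ _
      _ ≤ ∑ a' : Fin (k + 1), (∑ a : Fin (k + 1), ‖W a' a‖) * (B * supOnBall 1 Pm) :=
          Finset.sum_le_sum fun a' _ => h2 a'
      _ = A * (B * supOnBall 1 Pm) := by rw [hA_def]; exact (Finset.sum_mul _ _ _).symm
      _ = A * B * supOnBall 1 Pm := by ring
  have hfe : ‖iteratedFDeriv 𝕜 j Pm x (fun _ => y)‖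
      = (j.factorial : ℝ) * ‖polyQ k M x j (fun _ => y)‖ := by
    rw [← hfact, ← Nat.cast_smul_eq_nsmul 𝕜, norm_smul]
    simp
  rw [hfe]
  have hfac0 : (0 : ℝ) < j.factorial := by exact_mod_cast j.factorial_pos
  rw [one_div, inv_mul_cancel_left₀ (ne_of_gt hfac0)]
  calc ‖polyQ k M x j (fun _ => y)‖ ≤ A * B * supOnBall 1 Pm := h3
    _ ≤ (A * B + 1) * supOnBall 1 Pm := by nlinarith
end

section
/- Let X be a complex Banach space, (e_n)_{n∈ℕ} a sequence in X, and W a strictly convex complex Banach space. Let P : X → W be a continuous polynomial of degree at most k that attains its norm at an element x₀ (i.e. ‖P(x₀)‖ = sup_{‖x‖≤1} ‖P(x)‖) for which there exist n₀ ∈ ℕ and δ > 0 such that ‖x₀ + λ e_n‖ ≤ 1 for all λ ∈ ℂ with |λ| ≤ δ and all n ≥ n₀. Then D^j P(x₀)(e_n,…,e_n) = 0 for all j ≥ 1 and all n ≥ n₀. -/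
open Metric Filter Topology

section StrictConvex
variable {W : Type*} [NormedAddCommGroup W] [NormedSpace ℝ W] [StrictConvexSpace ℝ W]

lemma aux_pair {a b c : W} {t : ℝ} (h0 : 0 < t) (h1 : t < 1)
    (habc : t • a + (1 - t) • b = c) (ha : ‖a‖ ≤ ‖c‖) (hb : ‖b‖ ≤ ‖c‖) :
    a = c ∧ b = c := by
  have hab : a = b := by
    by_contra hne
    have hmem : c ∈ interior (Metric.closedBall (0 : W) ‖c‖) := by
      have := strictConvex_closedBall ℝ (0 : W) ‖c‖ (mem_closedBall_zero_iff.2 ha)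
        (mem_closedBall_zero_iff.2 hb) hne h0 (show (0:ℝ) < 1 - t by linarith)
        (show t + (1 - t) = 1 by ring)
      rwa [habc] at this
    rcases eq_or_ne c 0 with rfl | hc
    · apply hne
      have ha0 : a = 0 := norm_le_zero_iff.1 (by simpa using ha)
      have hb0 : b = 0 := norm_le_zero_iff.1 (by simpa using hb)
      rw [ha0, hb0]
    · rw [interior_closedBall _ (norm_ne_zero_iff.2 hc)] at hmem
      exact absurd (mem_ball_zero_iff.1 hmem) (lt_irrefl _)
  subst hab
  have hac : a = c := by rw [← habc]; module
  exact ⟨hac, hac⟩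

lemma aux_avg (s : Finset ℕ) :
    ∀ (w : ℕ → ℝ) (z : ℕ → W) (c : W), (∀ i ∈ s, 0 < w i) → (∑ i ∈ s, w i) = 1 →
      (∑ i ∈ s, w i • z i) = c → (∀ i ∈ s, ‖z i‖ ≤ ‖c‖) → ∀ i ∈ s, z i = c := by
  classical
  induction s using Finset.induction_on with
  | empty => intro w z c _ _ _ _ i hi; exact absurd hi (Finset.notMem_empty i)
  | @insert a s ha ih =>
    intro w z c hw hw1 hsum hz i hi
    rw [Finset.sum_insert ha] at hw1 hsum
    have hwa : 0 < w a := hw a (Finset.mem_insert_self a s)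
    have htnn : 0 ≤ ∑ i ∈ s, w i :=
      Finset.sum_nonneg fun i hi' => (hw i (Finset.mem_insert_of_mem hi')).le
    rcases eq_or_lt_of_le htnn with h0 | hpos
    · have hse : s = ∅ := by
        by_contra hne
        obtain ⟨j, hj⟩ := Finset.nonempty_iff_ne_empty.2 hne
        have := Finset.sum_pos (fun i hi' => hw i (Finset.mem_insert_of_mem hi')) ⟨j, hj⟩
        linarith
      subst hse
      simp only [Finset.sum_empty, add_zero] at hw1 hsum
      rw [hw1, one_smul] at hsum
      rcases Finset.mem_insert.1 hi with rfl | h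
      · exact hsum
      · exact absurd h (Finset.notMem_empty i)
    · set t := ∑ i ∈ s, w i with hts
      set S := ∑ i ∈ s, w i • z i with hSs
      have hSle : ‖S‖ ≤ t * ‖c‖ := by
        calc ‖S‖ ≤ ∑ i ∈ s, ‖w i • z i‖ := norm_sum_le _ _
        _ ≤ ∑ i ∈ s, w i * ‖c‖ := by
            apply Finset.sum_le_sum
            intro i hi'
            rw [norm_smul, Real.norm_eq_abs, abs_of_pos (hw i (Finset.mem_insert_of_mem hi'))]
            exact mul_le_mul_of_nonneg_left (hz i (Finset.mem_insert_of_mem hi'))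
              (hw i (Finset.mem_insert_of_mem hi')).le
        _ = t * ‖c‖ := by rw [← Finset.sum_mul]
      set b := t⁻¹ • S with hbs
      have hbn : ‖b‖ ≤ ‖c‖ := by
        rw [hbs, norm_smul, Real.norm_eq_abs, abs_of_pos (inv_pos.2 hpos)]
        calc t⁻¹ * ‖S‖ ≤ t⁻¹ * (t * ‖c‖) :=
              mul_le_mul_of_nonneg_left hSle (inv_pos.2 hpos).le
        _ = ‖c‖ := by field_simp
      have ht1 : t = 1 - w a := by linarith
      have hc2 : w a • z a + (1 - w a) • b = c := by
        rw [← ht1, hbs, smul_inv_smul₀ hpos.ne']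
        exact hsum
      have hpr := aux_pair hwa (by linarith) hc2 (hz a (Finset.mem_insert_self a s)) hbn
      rcases Finset.mem_insert.1 hi with rfl | his
      · exact hpr.1
      · refine ih (fun i => t⁻¹ * w i) z c ?_ ?_ ?_ ?_ i his
        · intro i hi'; exact mul_pos (inv_pos.2 hpos) (hw i (Finset.mem_insert_of_mem hi'))
        · rw [← Finset.mul_sum, ← hts, inv_mul_cancel₀ hpos.ne']
        · rw [← hpr.2, hbs]
          simp_rw [mul_smul]
          rw [← Finset.smul_sum]
        · intro i hi'; exact hz i (Finset.mem_insert_of_mem hi')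

lemma aux_avg_range (N : ℕ) (hN : 0 < N) (z : ℕ → W) (c : W)
    (hsum : ∑ j ∈ Finset.range N, z j = (N : ℝ) • c)
    (hz : ∀ j ∈ Finset.range N, ‖z j‖ ≤ ‖c‖) : ∀ j ∈ Finset.range N, z j = c := by
  have hN' : ((N : ℝ)) ≠ 0 := Nat.cast_ne_zero.2 hN.ne'
  refine aux_avg (Finset.range N) (fun _ => (N : ℝ)⁻¹) z c ?_ ?_ ?_ hz
  · intro i _; exact inv_pos.2 (Nat.cast_pos.2 hN)
  · rw [Finset.sum_const, Finset.card_range, nsmul_eq_mul, mul_inv_cancel₀ hN']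
  · rw [← Finset.smul_sum, hsum, smul_smul, inv_mul_cancel₀ hN', one_smul]

end StrictConvex

lemma aux_shift {𝕜 : Type*} [NontriviallyNormedField 𝕜] {E F : Type*} [NormedAddCommGroup E]
    [NormedSpace 𝕜 E] [NormedAddCommGroup F] [NormedSpace 𝕜 F]
    (f : E → F) (hf : ContDiff 𝕜 (⊤ : ℕ∞) f) (a : E) (n : ℕ) :
    ∀ x, iteratedFDeriv 𝕜 n (fun y => f (a + y)) x = iteratedFDeriv 𝕜 n f (a + x) := by
  induction n with
  | zero => intro x; ext m; simp
  | succ n ih =>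
    intro x
    have hdiff : DifferentiableAt 𝕜 (iteratedFDeriv 𝕜 n f) (a + x) :=
      (hf.differentiable_iteratedFDeriv
        (by exact_mod_cast ENat.coe_lt_top n)).differentiableAt
    have h3 : HasFDerivAt (fun y : E => a + y) (ContinuousLinearMap.id 𝕜 E) x := by
      simpa using (hasFDerivAt_id x).const_add a
    have h2 : HasFDerivAt (fun y => iteratedFDeriv 𝕜 n f (a + y))
        (fderiv 𝕜 (iteratedFDeriv 𝕜 n f) (a + x)) x := by
      have := hdiff.hasFDerivAt.comp x h3
      rw [ContinuousLinearMap.comp_id] at this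
      exact this
    ext m
    rw [iteratedFDeriv_succ_apply_left, iteratedFDeriv_succ_apply_left]
    have he : iteratedFDeriv 𝕜 n (fun y => f (a + y)) = fun x' => iteratedFDeriv 𝕜 n f (a + x') :=
      funext ih
    rw [he, h2.fderiv]

lemma aux_expand {X W : Type*} [NormedAddCommGroup X] [NormedSpace ℂ X]
    [NormedAddCommGroup W] [NormedSpace ℂ W] (k : ℕ)
    (M : ∀ j : ℕ, ContinuousMultilinearMap ℂ (fun _ : Fin j => X) W) (x₀ v : X) :
    ∃ c : ℕ → W, ∀ μ : ℂ,
      ∑ j ∈ Finset.range (k + 1), M j (fun _ => x₀ + μ • v)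
        = ∑ m ∈ Finset.range (k + 1), μ ^ m • c m := by
  classical
  refine ⟨fun m => ∑ j ∈ Finset.range (k + 1),
      ∑ s ∈ Finset.univ.filter (fun s : Finset (Fin j) => s.card = m),
        M j (s.piecewise (fun _ => v) (fun _ => x₀)), fun μ => ?_⟩
  have step : ∀ j ∈ Finset.range (k + 1), M j (fun _ => x₀ + μ • v)
      = ∑ m ∈ Finset.range (k + 1), μ ^ m •
          ∑ s ∈ Finset.univ.filter (fun s : Finset (Fin j) => s.card = m),
            M j (s.piecewise (fun _ => v) (fun _ => x₀)) := by
    intro j hj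
    have h0 : (fun _ : Fin j => x₀ + μ • v) = (fun _ : Fin j => μ • v) + (fun _ => x₀) := by
      funext i
      exact add_comm _ _
    rw [h0, (M j).map_add_univ]
    have hterm : ∀ s : Finset (Fin j),
        M j (s.piecewise (fun _ => μ • v) (fun _ => x₀))
          = μ ^ s.card • M j (s.piecewise (fun _ => v) (fun _ => x₀)) := by
      intro s
      have hpw : s.piecewise (fun _ : Fin j => μ • v) (fun _ => x₀)
          = s.piecewise (fun i => μ • (s.piecewise (fun _ : Fin j => v) (fun _ => x₀)) i)
              (s.piecewise (fun _ : Fin j => v) (fun _ => x₀)) := by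
        funext i
        by_cases hi : i ∈ s
        · simp [Finset.piecewise_eq_of_mem _ _ _ hi]
        · simp [Finset.piecewise_eq_of_notMem _ _ _ hi]
      rw [hpw, (M j).map_piecewise_smul (fun _ => μ)]
      simp
    calc ∑ s : Finset (Fin j), M j (s.piecewise (fun _ => μ • v) (fun _ => x₀))
        = ∑ s : Finset (Fin j), μ ^ s.card • M j (s.piecewise (fun _ => v) (fun _ => x₀)) :=
          Finset.sum_congr rfl (fun s _ => hterm s)
      _ = ∑ m ∈ Finset.range (k + 1), ∑ s ∈ Finset.univ.filter
            (fun s : Finset (Fin j) => s.card = m),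
            μ ^ s.card • M j (s.piecewise (fun _ => v) (fun _ => x₀)) := by
          rw [Finset.sum_fiberwise_of_maps_to]
          intro s _
          rw [Finset.mem_range]
          have h1 : s.card ≤ j := by
            simpa using Finset.card_le_univ s
          have h2 := Finset.mem_range.1 hj
          omega
      _ = ∑ m ∈ Finset.range (k + 1), μ ^ m •
            ∑ s ∈ Finset.univ.filter (fun s : Finset (Fin j) => s.card = m),
              M j (s.piecewise (fun _ => v) (fun _ => x₀)) := by
          refine Finset.sum_congr rfl (fun m _ => ?_)
          rw [Finset.smul_sum]
          refine Finset.sum_congr rfl (fun s hs => ?_)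
          rw [(Finset.mem_filter.1 hs).2]
  rw [Finset.sum_congr rfl step, Finset.sum_comm]
  refine Finset.sum_congr rfl (fun m _ => ?_)
  rw [Finset.smul_sum]

lemma aux_roots (k : ℕ) : ∃ ζ : ℂ, ‖ζ‖ = 1 ∧ ∀ (μ : ℂ), ∀ m ∈ Finset.range (k + 1),
    ∑ j ∈ Finset.range (k + 1), (μ * ζ ^ j) ^ m
      = if m = 0 then (((k : ℕ) + 1 : ℕ) : ℂ) else 0 := by
  have hk : (k + 1 : ℕ) ≠ 0 := Nat.succ_ne_zero k
  have hprim := Complex.isPrimitiveRoot_exp (k + 1) hk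
  set ζ := Complex.exp (2 * ↑Real.pi * Complex.I / (↑(k + 1))) with hζ
  have hnorm : ‖ζ‖ = 1 := by
    have h1 : (2 * ↑Real.pi * Complex.I / (↑(k + 1)) : ℂ)
        = ((2 * Real.pi / (k + 1) : ℝ) : ℂ) * Complex.I := by
      push_cast
      ring
    rw [hζ, h1, Complex.norm_exp_ofReal_mul_I]
  refine ⟨ζ, hnorm, fun μ m hm => ?_⟩
  rcases eq_or_ne m 0 with rfl | hm0
  · simp
  · rw [if_neg hm0]
    have hstep : ∀ j, (μ * ζ ^ j) ^ m = μ ^ m * (ζ ^ m) ^ j := by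
      intro j
      rw [mul_pow, ← pow_mul, mul_comm j m, pow_mul]
    simp_rw [hstep]
    rw [← Finset.mul_sum]
    have hne1 : ζ ^ m ≠ 1 :=
      hprim.pow_ne_one_of_pos_of_lt hm0 (Finset.mem_range.1 hm)
    rw [geom_sum_eq hne1]
    have : (ζ ^ m) ^ (k + 1) = 1 := by
      rw [← pow_mul, mul_comm m (k + 1), pow_mul, hprim.pow_eq_one, one_pow]
    rw [this]
    simp

theorem stmt8 {X W : Type*}
    [NormedAddCommGroup X] [NormedSpace ℂ X] [CompleteSpace X]
    [NormedAddCommGroup W] [NormedSpace ℂ W] [CompleteSpace W]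
    [StrictConvexSpace ℝ W]
    (e : ℕ → X) (k : ℕ) (P : X → W) (hP : IsPolyDegLE ℂ k P)
    (x₀ : X) (hx₀ : ‖x₀‖ ≤ 1) (hatt : ‖P x₀‖ = supOnBall 1 P)
    (n₀ : ℕ) (δ : ℝ) (hδ : 0 < δ)
    (hcond : ∀ l : ℂ, ‖l‖ ≤ δ → ∀ n, n₀ ≤ n → ‖x₀ + l • e n‖ ≤ 1) :
    ∀ j, 1 ≤ j → ∀ n, n₀ ≤ n → iteratedFDeriv ℂ j P x₀ (fun _ => e n) = 0 := by
  classical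
  obtain ⟨Pc, hPc, hPsum⟩ := hP
  obtain ⟨M, hM⟩ : ∃ M : ∀ j : ℕ, ContinuousMultilinearMap ℂ (fun _ : Fin j => X) W,
      ∀ j, j ≤ k → ∀ x, Pc j x = M j fun _ => x := by
    refine ⟨fun j => if h : j ≤ k then (hPc j h).choose else 0, fun j hj x => ?_⟩
    show Pc j x = (if h : j ≤ k then (hPc j h).choose else 0) fun _ => x
    rw [dif_pos hj]
    exact (hPc j hj).choose_spec x
  have hPrep : ∀ x, P x = ∑ j ∈ Finset.range (k + 1), M j (fun _ => x) := by
    intro x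
    rw [hPsum x]
    exact Finset.sum_congr rfl fun j hj => hM j (Finset.mem_range_succ_iff.1 hj) x
  -- boundedness and norm attainment
  have hB : ∀ x : X, ‖x‖ ≤ 1 → ‖P x‖ ≤ ∑ j ∈ Finset.range (k + 1), ‖M j‖ := by
    intro x hx
    rw [hPrep x]
    refine (norm_sum_le _ _).trans (Finset.sum_le_sum fun j _ => ?_)
    have h1 := (M j).le_opNorm (fun _ => x)
    have h2 : (∏ _i : Fin j, ‖x‖) = ‖x‖ ^ j := by simp
    rw [h2] at h1
    refine h1.trans ?_
    calc ‖M j‖ * ‖x‖ ^ j ≤ ‖M j‖ * 1 :=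
          mul_le_mul_of_nonneg_left (pow_le_one₀ (norm_nonneg x) hx) (norm_nonneg _)
    _ = ‖M j‖ := mul_one _
  have hsup : ∀ x : X, ‖x‖ ≤ 1 → ‖P x‖ ≤ ‖P x₀‖ := by
    intro x hx
    rw [hatt]
    refine le_csSup ⟨∑ j ∈ Finset.range (k + 1), ‖M j‖, ?_⟩ ?_
    · rintro y ⟨u, hu, rfl⟩
      exact hB u (by simpa [dist_zero_right] using hu)
    · exact ⟨x, by simpa [dist_zero_right] using hx, rfl⟩
  -- smoothness of P
  have hcont : ContDiff ℂ (⊤ : ℕ∞) P := by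
    have : P = fun x => ∑ j ∈ Finset.range (k + 1), M j (fun _ => x) := funext hPrep
    rw [this]
    exact ContDiff.sum fun j _ =>
      ((M j).contDiff).comp (contDiff_pi.mpr fun _ => contDiff_id)
  intro j hj n hn
  set v := e n with hv
  obtain ⟨c, hc⟩ := aux_expand k M x₀ v
  have hgc : ∀ μ : ℂ, P (x₀ + μ • v) = ∑ m ∈ Finset.range (k + 1), μ ^ m • c m := by
    intro μ
    rw [hPrep (x₀ + μ • v)]
    exact hc μ
  have hc0 : c 0 = P x₀ := by
    have := hgc 0
    rw [zero_smul, add_zero] at this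
    rw [this, Finset.sum_eq_single 0]
    · simp
    · intro m _ hm0
      rw [zero_pow hm0, zero_smul]
    · intro h
      exact absurd (Finset.mem_range.2 (Nat.succ_pos k)) h
  -- constancy on the disk of radius δ
  have hconst : ∀ μ : ℂ, ‖μ‖ ≤ δ → P (x₀ + μ • v) = P x₀ := by
    intro μ hμ
    obtain ⟨ζ, hζn, hζs⟩ := aux_roots k
    set z : ℕ → W := fun i => P (x₀ + (μ * ζ ^ i) • v) with hz
    have hnorms : ∀ i ∈ Finset.range (k + 1), ‖z i‖ ≤ ‖c 0‖ := by
      intro i _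
      rw [hc0]
      have habs : ‖μ * ζ ^ i‖ ≤ δ := by
        rw [norm_mul, norm_pow, hζn, one_pow, mul_one]
        exact hμ
      exact hsup _ (hcond (μ * ζ ^ i) habs n hn)
    have hzsum : ∑ i ∈ Finset.range (k + 1), z i = ((k + 1 : ℕ) : ℝ) • c 0 := by
      have h1 : ∑ i ∈ Finset.range (k + 1), z i
          = ∑ m ∈ Finset.range (k + 1),
              (∑ i ∈ Finset.range (k + 1), (μ * ζ ^ i) ^ m) • c m := by
        simp_rw [hz, hgc]
        rw [Finset.sum_comm]
        exact Finset.sum_congr rfl fun m _ => by rw [Finset.sum_smul]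
      rw [h1]
      have h2 : ∀ m ∈ Finset.range (k + 1),
          (∑ i ∈ Finset.range (k + 1), (μ * ζ ^ i) ^ m) • c m
            = if m = 0 then ((k + 1 : ℕ) : ℂ) • c 0 else 0 := by
        intro m hm
        rw [hζs μ m hm]
        rcases eq_or_ne m 0 with rfl | hm0
        · rw [if_pos rfl, if_pos rfl]
        · rw [if_neg hm0, if_neg hm0, zero_smul]
      rw [Finset.sum_congr rfl h2, Finset.sum_ite_eq' (Finset.range (k + 1)) 0,
        if_pos (Finset.mem_range.2 (Nat.succ_pos k))]
      rw [Nat.cast_smul_eq_nsmul, Nat.cast_smul_eq_nsmul]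
    have hmain := aux_avg_range (k + 1) (Nat.succ_pos k) z (c 0) hzsum hnorms 0
      (Finset.mem_range.2 (Nat.succ_pos k))
    rw [hz] at hmain
    simp only [pow_zero, mul_one] at hmain
    rw [hmain, hc0]
  -- derivative computation
  have hf : ContDiff ℂ (⊤ : ℕ∞) (fun y : X => P (x₀ + y)) :=
    hcont.comp (contDiff_const.add contDiff_id)
  set L : ℂ →L[ℂ] X := ContinuousLinearMap.toSpanSingleton ℂ v with hL
  have hLapp : ∀ μ : ℂ, L μ = μ • v := fun μ => rfl
  have hφeq : ((fun y : X => P (x₀ + y)) ∘ L) =ᶠ[𝓝 (0 : ℂ)] fun _ => P x₀ := by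
    filter_upwards [Metric.ball_mem_nhds (0 : ℂ) hδ] with μ hμ
    have : ‖μ‖ ≤ δ := (mem_ball_zero_iff.1 hμ).le
    simpa [Function.comp, hLapp] using hconst μ this
  have h1 : iteratedFDeriv ℂ j ((fun y : X => P (x₀ + y)) ∘ L) 0 = 0 := by
    have heq : iteratedFDeriv ℂ j ((fun y : X => P (x₀ + y)) ∘ L) 0
        = iteratedFDeriv ℂ j (fun _ : ℂ => P x₀) 0 := by
      rw [← iteratedFDerivWithin_univ, ← iteratedFDerivWithin_univ]
      apply Filter.EventuallyEq.iteratedFDerivWithin_eq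
      · rw [nhdsWithin_univ]
        exact hφeq
      · simpa [Function.comp, hLapp] using hconst 0 (by simpa using hδ.le)
    rw [heq, iteratedFDeriv_const_of_ne (by omega : j ≠ 0)]
    rfl
  have h2 := ContinuousLinearMap.iteratedFDeriv_comp_right L hf (0 : ℂ)
    (by exact_mod_cast (le_top : (j : ℕ∞) ≤ ⊤))
  have h4 : iteratedFDeriv ℂ j (fun y : X => P (x₀ + y)) 0 = iteratedFDeriv ℂ j P x₀ := by
    have := aux_shift P hcont x₀ j 0
    simpa using this
  have h5 : iteratedFDeriv ℂ j P x₀ (fun _ => L 1) = 0 := by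
    have hL0 : L (0 : ℂ) = 0 := map_zero L
    have := congrArg (fun (T : ContinuousMultilinearMap ℂ (fun _ : Fin j => ℂ) W) =>
      T (fun _ => (1 : ℂ))) (h2.symm.trans h1)
    simp only [ContinuousMultilinearMap.compContinuousLinearMap_apply,
      ContinuousMultilinearMap.zero_apply] at this
    rw [hL0] at this
    rw [← h4]
    rw [← this]
  have hL1 : L (1 : ℂ) = v := by rw [hLapp, one_smul]
  rw [← hL1]
  exact h5
end

section
/- Let c₀ denote the Banach space of complex sequences converging to 0 with the supremum norm and (e_n) its canonical unit vectors, and let W be a strictly convex complex Banach space. Suppose f ∈ A_u(c₀;W) attains its norm at x₀, i.e. ‖x₀‖_∞ ≤ 1 and ‖f(x₀)‖ = sup_{‖x‖_∞≤1} ‖f(x)‖. Then there exist n₀ ∈ ℕ and δ > 0 such that f(x₀ + λ e_n) = f(x₀) for all n ≥ n₀ and all λ ∈ ℂ with |λ| < δ/2. -/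
open Metric Filter

noncomputable def c0e (n : ℕ) : ZeroAtInftyContinuousMap ℕ ℂ where
  toFun := fun m => if m = n then 1 else 0
  continuous_toFun := continuous_of_discreteTopology
  zero_at_infty' := by
    rw [cocompact_eq_atTop]
    have h : ∀ᶠ m in Filter.atTop, (if m = n then (1:ℂ) else 0) = 0 := by
      filter_upwards [Filter.eventually_gt_atTop n] with m hm
      simp [Nat.ne_of_gt hm]
    exact Filter.Tendsto.congr' (h.mono fun m hm => hm.symm) tendsto_const_nhds

lemma c0_norm_le (x : ZeroAtInftyContinuousMap ℕ ℂ) {C : ℝ} (hC : 0 ≤ C)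
    (h : ∀ m, ‖x m‖ ≤ C) : ‖x‖ ≤ C := by
  change ‖x.toBCF‖ ≤ C
  exact (BoundedContinuousFunction.norm_le hC).mpr h

lemma c0e_apply (n m : ℕ) : c0e n m = if m = n then 1 else 0 := rfl

lemma bdd_of_uc {X W : Type*} [NormedAddCommGroup X] [NormedSpace ℝ X] [NormedAddCommGroup W]
    {f : X → W} (h : UniformContinuousOn f (Metric.closedBall 0 1)) :
    ∃ M, ∀ x ∈ Metric.closedBall (0 : X) 1, ‖f x‖ ≤ M := by
  obtain ⟨δ, hδ, hδ'⟩ := Metric.uniformContinuousOn_iff.mp h 1 one_pos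
  obtain ⟨N, hN⟩ := exists_nat_gt (1 / δ)
  have hN0 : (0 : ℝ) < N := lt_trans (by positivity) hN
  have hstep : (1 : ℝ) / N < δ := by
    rw [div_lt_iff₀ hN0]
    have := (div_lt_iff₀ hδ).mp hN
    linarith
  have hmem : ∀ k : ℕ, (k : ℝ) ≤ N → ∀ x ∈ Metric.closedBall (0 : X) 1,
      ((k : ℝ) / N) • x ∈ Metric.closedBall (0 : X) 1 := by
    intro k hk x hx
    simp only [Metric.mem_closedBall, dist_zero_right] at hx ⊢
    rw [norm_smul, Real.norm_eq_abs, abs_of_nonneg (by positivity)]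
    calc (k : ℝ) / N * ‖x‖ ≤ 1 * 1 := by
          apply mul_le_mul _ hx (norm_nonneg x) zero_le_one
          exact (div_le_one hN0).mpr hk
      _ = 1 := by ring
  have key : ∀ k : ℕ, (k : ℝ) ≤ N → ∀ x ∈ Metric.closedBall (0 : X) 1,
      dist (f (((k : ℝ) / N) • x)) (f 0) ≤ k := by
    intro k
    induction k with
    | zero => intro _ x _; simp
    | succ k ih =>
      intro hk x hx
      have hkk : (k : ℝ) ≤ N := by push_cast at hk ⊢; linarith
      have h1 := ih hkk x hx
      have hd : dist ((((k + 1 : ℕ) : ℝ) / N) • x) (((k : ℝ) / N) • x) < δ := by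
        rw [dist_eq_norm, ← sub_smul]
        have he : ((k + 1 : ℕ) : ℝ) / N - (k : ℝ) / N = 1 / N := by push_cast; ring
        rw [he, norm_smul, Real.norm_eq_abs, abs_of_nonneg (by positivity)]
        calc 1 / N * ‖x‖ ≤ 1 / N * 1 := by
              apply mul_le_mul_of_nonneg_left _ (by positivity)
              simpa [dist_zero_right] using hx
          _ < δ := by rw [mul_one]; exact hstep
      have h2 := hδ' _ (hmem (k + 1) hk x hx) _ (hmem k hkk x hx) hd
      calc dist (f ((((k + 1 : ℕ) : ℝ) / N) • x)) (f 0)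
          ≤ dist (f ((((k + 1 : ℕ) : ℝ) / N) • x)) (f (((k : ℝ) / N) • x))
            + dist (f (((k : ℝ) / N) • x)) (f 0) := dist_triangle _ _ _
        _ ≤ 1 + k := add_le_add (le_of_lt h2) h1
        _ = ((k + 1 : ℕ) : ℝ) := by push_cast; ring
  refine ⟨‖f 0‖ + N, fun x hx => ?_⟩
  have := key N le_rfl x hx
  rw [div_self (ne_of_gt hN0), one_smul, dist_eq_norm] at this
  have h4 := norm_add_le (f x - f 0) (f 0)
  rw [sub_add_cancel] at h4
  linarith

theorem stmt11 {W : Type*}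
    [NormedAddCommGroup W] [NormedSpace ℂ W] [CompleteSpace W]
    [StrictConvexSpace ℝ W]
    (f : ZeroAtInftyContinuousMap ℕ ℂ → W) (hf : MemAu f)
    (x₀ : ZeroAtInftyContinuousMap ℕ ℂ) (hx₀ : ‖x₀‖ ≤ 1)
    (hatt : ‖f x₀‖ = supOnBall 1 f) :
    ∃ (n₀ : ℕ) (δ : ℝ), 0 < δ ∧
      ∀ n, n₀ ≤ n → ∀ l : ℂ, ‖l‖ < δ / 2 → f (x₀ + l • c0e n) = f x₀ := by
  obtain ⟨hdiff, huc⟩ := hf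
  obtain ⟨M₀, hM₀⟩ := bdd_of_uc huc
  have hbdd : BddAbove ((fun x => ‖f x‖) '' Metric.closedBall (0 : ZeroAtInftyContinuousMap ℕ ℂ) 1) :=
    ⟨M₀, by rintro - ⟨x, hx, rfl⟩; exact hM₀ x hx⟩
  have hub : ∀ y ∈ Metric.closedBall (0 : ZeroAtInftyContinuousMap ℕ ℂ) 1, ‖f y‖ ≤ ‖f x₀‖ := by
    intro y hy
    rw [hatt, supOnBall]
    exact le_csSup hbdd ⟨y, hy, rfl⟩
  have hz0 := x₀.zero_at_infty'
  rw [cocompact_eq_atTop] at hz0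
  have hev : ∀ᶠ m in atTop, ‖x₀ m‖ < 1 / 2 := by
    have := hz0 (Metric.ball_mem_nhds (0 : ℂ) (by norm_num : (0:ℝ) < 1 / 2))
    filter_upwards [this] with m hm
    simpa [Metric.mem_ball, dist_zero_right] using hm
  obtain ⟨n₀, hn₀⟩ := eventually_atTop.mp hev
  refine ⟨n₀, 1 / 2, by norm_num, ?_⟩
  intro n hn l hl
  have hxn : ‖x₀ n‖ < 1 / 2 := hn₀ n hn
  set z : ZeroAtInftyContinuousMap ℕ ℂ := x₀ - x₀ n • c0e n with hzdef
  have hball : ∀ w : ℂ, ‖w‖ ≤ 1 → ‖z + w • c0e n‖ ≤ 1 := by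
    intro w hw
    apply c0_norm_le _ zero_le_one
    intro m
    by_cases hm : m = n
    · subst hm
      simp only [hzdef, ZeroAtInftyContinuousMap.coe_add, ZeroAtInftyContinuousMap.coe_sub,
        ZeroAtInftyContinuousMap.coe_smul, Pi.add_apply, Pi.sub_apply, Pi.smul_apply,
        c0e_apply, if_pos rfl, smul_eq_mul, mul_one]
      simpa using hw
    · simp only [hzdef, ZeroAtInftyContinuousMap.coe_add, ZeroAtInftyContinuousMap.coe_sub,
        ZeroAtInftyContinuousMap.coe_smul, Pi.add_apply, Pi.sub_apply, Pi.smul_apply,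
        c0e_apply, if_neg hm, smul_eq_mul, mul_zero, sub_zero, add_zero]
      exact le_trans (x₀.toBCF.norm_coe_le_norm m) hx₀
  set F : ℂ → W := fun w => f (z + w • c0e n) with hF
  set r : ℕ → ℝ := fun k => 1 - 1 / (k + 2) with hr
  have hr0 : ∀ k, (0 : ℝ) ≤ r k := by
    intro k
    have h2 : (1 : ℝ) ≤ (k : ℝ) + 2 := by have := (Nat.cast_nonneg k : (0:ℝ) ≤ k); linarith
    have : 1 / ((k : ℝ) + 2) ≤ 1 := by
      rw [div_le_one (by positivity)]; exact h2
    simp only [hr]; linarith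
  have hr1 : ∀ k, r k < 1 := by
    intro k
    have : (0 : ℝ) < 1 / ((k : ℝ) + 2) := by positivity
    simp only [hr]; linarith
  have hnorm_smul : ∀ (k : ℕ) (v : ZeroAtInftyContinuousMap ℕ ℂ),
      ‖((r k : ℝ) : ℂ) • v‖ = r k * ‖v‖ := by
    intro k v
    have h := norm_smul ((r k : ℝ) : ℂ) v
    rw [Complex.norm_real, Real.norm_eq_abs, abs_of_nonneg (hr0 k)] at h
    exact h
  set G : ℕ → ℂ → W := fun k w => f (((r k : ℝ) : ℂ) • (z + w • c0e n)) with hG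
  have hGd : ∀ k, DifferentiableOn ℂ (G k) (Metric.ball 0 1) := by
    intro k
    have hg : Differentiable ℂ (fun w : ℂ => ((r k : ℝ) : ℂ) • (z + w • c0e n)) := by
      have hh : Differentiable ℂ (fun w : ℂ => z + w • c0e n) :=
        (differentiable_const z).add (differentiable_id.smul_const (c0e n))
      exact hh.const_smul ((r k : ℝ) : ℂ)
    have hmap : Set.MapsTo (fun w : ℂ => ((r k : ℝ) : ℂ) • (z + w • c0e n))
        (Metric.ball 0 1) (Metric.ball (0 : ZeroAtInftyContinuousMap ℕ ℂ) 1) := by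
      intro w hw
      simp only [Metric.mem_ball, dist_zero_right] at hw ⊢
      rw [hnorm_smul]
      calc r k * ‖z + w • c0e n‖ ≤ r k * 1 :=
            mul_le_mul_of_nonneg_left (hball w hw.le) (hr0 k)
        _ < 1 := by rw [mul_one]; exact hr1 k
    exact hdiff.comp hg.differentiableOn hmap
  have hGF : TendstoUniformlyOn G F atTop (Metric.ball 0 1) := by
    rw [Metric.tendstoUniformlyOn_iff]
    intro ε hε
    obtain ⟨δ, hδpos, hδ⟩ := Metric.uniformContinuousOn_iff.mp huc ε hε
    obtain ⟨K, hK⟩ := exists_nat_gt (1 / δ)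
    filter_upwards [eventually_ge_atTop K] with k hk
    intro w hw
    have hw1 : ‖w‖ ≤ 1 := by
      simp only [Metric.mem_ball, dist_zero_right] at hw; exact hw.le
    have h1 : ‖z + w • c0e n‖ ≤ 1 := hball w hw1
    have hmem1 : z + w • c0e n ∈ Metric.closedBall (0 : ZeroAtInftyContinuousMap ℕ ℂ) 1 := by
      simpa [Metric.mem_closedBall, dist_zero_right] using h1
    have hmem2 : ((r k : ℝ) : ℂ) • (z + w • c0e n)
        ∈ Metric.closedBall (0 : ZeroAtInftyContinuousMap ℕ ℂ) 1 := by
      simp only [Metric.mem_closedBall, dist_zero_right]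
      rw [hnorm_smul]
      calc r k * ‖z + w • c0e n‖ ≤ 1 * 1 :=
            mul_le_mul (hr1 k).le h1 (norm_nonneg _) zero_le_one
        _ = 1 := by ring
    have hdist : dist (z + w • c0e n) (((r k : ℝ) : ℂ) • (z + w • c0e n)) < δ := by
      rw [dist_eq_norm]
      have he : (z + w • c0e n) - ((r k : ℝ) : ℂ) • (z + w • c0e n)
          = ((1 - r k : ℝ) : ℂ) • (z + w • c0e n) := by
        push_cast
        module
      have hns := norm_smul (((1 - r k : ℝ)) : ℂ) (z + w • c0e n)
      rw [Complex.norm_real, Real.norm_eq_abs] at hns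
      rw [he, hns]
      have h1r : (1 : ℝ) - r k = 1 / (k + 2) := by simp [hr]
      rw [h1r, abs_of_nonneg (by positivity)]
      have hkd : 1 / ((k : ℝ) + 2) < δ := by
        rw [div_lt_iff₀ (by positivity)]
        have h2 : 1 / δ < (k : ℝ) + 2 := lt_of_lt_of_le hK (by linarith [(Nat.cast_le (α := ℝ)).mpr hk])
        rw [div_lt_iff₀ hδpos] at h2
        linarith
      calc 1 / ((k : ℝ) + 2) * ‖z + w • c0e n‖ ≤ 1 / ((k : ℝ) + 2) * 1 :=
            mul_le_mul_of_nonneg_left h1 (by positivity)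
        _ < δ := by rw [mul_one]; exact hkd
    exact hδ _ hmem1 _ hmem2 hdist
  have hFd : DifferentiableOn ℂ F (Metric.ball 0 1) :=
    hGF.tendstoLocallyUniformlyOn.differentiableOn (Eventually.of_forall hGd) Metric.isOpen_ball
  have hx₀eq : z + x₀ n • c0e n = x₀ := sub_add_cancel _ _
  have hFx : F (x₀ n) = f x₀ := by rw [hF]; simp only [hx₀eq]
  have hmem : (x₀ n : ℂ) ∈ Metric.ball (0 : ℂ) 1 := by
    simp only [Metric.mem_ball, dist_zero_right]
    linarith
  have hmax : IsMaxOn (norm ∘ F) (Metric.ball 0 1) (x₀ n) := by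
    intro w hw
    simp only [Function.comp_apply, Set.mem_setOf_eq, hFx]
    apply hub
    simp only [Metric.mem_closedBall, dist_zero_right]
    have hw1 : ‖w‖ ≤ 1 := by
      simp only [Metric.mem_ball, dist_zero_right] at hw; exact hw.le
    exact hball w hw1
  have heq := Complex.eqOn_of_isPreconnected_of_isMaxOn_norm
    (convex_ball (0 : ℂ) 1).isPreconnected Metric.isOpen_ball hFd hmem hmax
  have hwmem : x₀ n + l ∈ Metric.ball (0 : ℂ) 1 := by
    simp only [Metric.mem_ball, dist_zero_right]
    calc ‖x₀ n + l‖ ≤ ‖x₀ n‖ + ‖l‖ := norm_add_le _ _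
      _ < 1 / 2 + 1 / 2 / 2 := add_lt_add hxn hl
      _ < 1 := by norm_num
  have hkey : z + (x₀ n + l) • c0e n = x₀ + l • c0e n := by
    rw [hzdef]; module
  calc f (x₀ + l • c0e n) = F (x₀ n + l) := by rw [hF]; simp only [hkey]
    _ = F (x₀ n) := heq hwmem
    _ = f x₀ := hFx
end

section
/- Let X be a complex Banach space, (e_n)_{n∈ℕ} a sequence in X, W a strictly convex complex Banach space, and 0 < s < 1. Suppose f ∈ A_u(X;W) attains its ‖·‖_s-norm at an element x₀ with ‖x₀‖ ≤ s (i.e. ‖f(x₀)‖ = sup_{‖x‖≤s} ‖f(x)‖), and that there exist n₀ ∈ ℕ and δ > 0 such that ‖x₀ + λ e_n‖ ≤ s for all λ ∈ ℂ with |λ| ≤ δ and all n ≥ n₀. Then D^j f(x₀)(e_n,…,e_n) = 0 for all j ≥ 1 and all n ≥ n₀. -/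
open Metric Filter

/-- A function uniformly continuous on the unit closed ball is bounded on any closed ball of
radius `s ≤ 1`, by a chaining argument along segments. -/
lemma bound_of_uc {X W : Type*} [NormedAddCommGroup X] [NormedSpace ℂ X]
    [NormedAddCommGroup W] (f : X → W)
    (h : UniformContinuousOn f (Metric.closedBall (0 : X) 1))
    {s : ℝ} (hs1 : s ≤ 1) :
    ∃ C, ∀ x ∈ Metric.closedBall (0 : X) s, ‖f x‖ ≤ C := by
  rcases Metric.uniformContinuousOn_iff.1 h 1 one_pos with ⟨r, hr0, hr⟩
  set N : ℕ := ⌈(1 : ℝ) / r⌉₊ + 1 with hN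
  have hN0 : (0 : ℝ) < N := by positivity
  have hNr : (1 : ℝ) / N < r := by
    have h1 : (1 : ℝ) / r < N := by
      have := Nat.le_ceil ((1 : ℝ) / r)
      have h2 : (⌈(1 : ℝ) / r⌉₊ : ℝ) < N := by
        simp only [hN]; push_cast; linarith
      linarith
    rw [div_lt_iff₀ hN0]
    rw [div_lt_iff₀ hr0] at h1
    linarith
  refine ⟨‖f 0‖ + N, fun x hx => ?_⟩
  rw [Metric.mem_closedBall, dist_zero_right] at hx
  have hx1 : ‖x‖ ≤ 1 := hx.trans hs1
  have key : ∀ k : ℕ, k ≤ N → ‖f (((k : ℂ) / N) • x)‖ ≤ ‖f 0‖ + k := by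
    intro k hk
    induction k with
    | zero => simp
    | succ k ih =>
      have hk' : k ≤ N := Nat.le_of_succ_le hk
      have ihk := ih hk'
      have hnormc : ∀ m : ℕ, m ≤ N → ‖((m : ℂ) / N)‖ ≤ 1 := by
        intro m hm
        rw [norm_div]
        simp only [Complex.norm_natCast]
        rw [div_le_one hN0]
        exact_mod_cast hm
      have hmem : ∀ m : ℕ, m ≤ N → ((m : ℂ) / N) • x ∈ Metric.closedBall (0 : X) 1 := by
        intro m hm
        rw [Metric.mem_closedBall, dist_zero_right, norm_smul]
        calc ‖((m : ℂ) / N)‖ * ‖x‖ ≤ 1 * 1 :=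
          mul_le_mul (hnormc m hm) hx1 (norm_nonneg x) zero_le_one
        _ = 1 := one_mul 1
      have hdist : dist (((k : ℂ) / N) • x) ((((k : ℕ) + 1 : ℂ) / N) • x) < r := by
        rw [dist_eq_norm, ← sub_smul, norm_smul]
        have : ((k : ℂ) / N) - (((k : ℕ) + 1 : ℂ) / N) = -(1 / N) := by
          field_simp
          ring
        rw [this]
        have h1 : ‖(-(1 / N) : ℂ)‖ = 1 / N := by
          rw [norm_neg, norm_div, norm_one]
          simp [Complex.norm_natCast]
        rw [h1]
        calc (1 / N : ℝ) * ‖x‖ ≤ (1 / N) * 1 := by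
              apply mul_le_mul_of_nonneg_left hx1 (by positivity)
        _ = 1 / N := mul_one _
        _ < r := hNr
      have hk1 : (((k : ℕ) + 1 : ℂ)) = ((k + 1 : ℕ) : ℂ) := by push_cast; ring
      have := hr _ (hmem k hk') _ (hmem (k + 1) hk) (by rw [← hk1] at *; exact hdist)
      have htri : ‖f ((((k + 1 : ℕ) : ℂ) / N) • x)‖ ≤ ‖f (((k : ℂ) / N) • x)‖ + 1 := by
        have h2 : dist (f (((k : ℂ) / N) • x)) (f ((((k + 1 : ℕ) : ℂ) / N) • x)) ≤ 1 := this.le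
        calc ‖f ((((k + 1 : ℕ) : ℂ) / N) • x)‖
            ≤ ‖f (((k : ℂ) / N) • x)‖ +
              dist (f (((k : ℂ) / N) • x)) (f ((((k + 1 : ℕ) : ℂ) / N) • x)) := by
              rw [dist_eq_norm]
              have := norm_sub_norm_le (f (((k : ℂ) / N) • x)) (f ((((k + 1 : ℕ) : ℂ) / N) • x))
              have := norm_le_norm_add_norm_sub' (f ((((k + 1 : ℕ) : ℂ) / N) • x))
                (f (((k : ℂ) / N) • x))
              linarith [norm_sub_rev (f (((k : ℂ) / N) • x)) (f ((((k + 1 : ℕ) : ℂ) / N) • x)) ▸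
                this]
          _ ≤ ‖f (((k : ℂ) / N) • x)‖ + 1 := by linarith
      calc ‖f ((((k + 1 : ℕ) : ℂ) / N) • x)‖ ≤ ‖f (((k : ℂ) / N) • x)‖ + 1 := htri
        _ ≤ ‖f 0‖ + k + 1 := by linarith
        _ = ‖f 0‖ + (k + 1 : ℕ) := by push_cast; ring
  have hNx : (((N : ℕ) : ℂ) / N) • x = x := by
    rw [div_self (by exact_mod_cast hN0.ne' : ((N : ℕ) : ℂ) ≠ 0), one_smul]
  have := key N le_rfl
  rw [hNx] at this
  exact this

theorem stmt13 {X W : Type*}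
    [NormedAddCommGroup X] [NormedSpace ℂ X] [CompleteSpace X]
    [NormedAddCommGroup W] [NormedSpace ℂ W] [CompleteSpace W]
    [StrictConvexSpace ℝ W]
    (e : ℕ → X) (s : ℝ) (hs0 : 0 < s) (hs1 : s < 1)
    (f : X → W) (hf : MemAu f)
    (x₀ : X) (hx₀ : ‖x₀‖ ≤ s) (hatt : ‖f x₀‖ = supOnBall s f)
    (n₀ : ℕ) (δ : ℝ) (hδ : 0 < δ)
    (hcond : ∀ l : ℂ, ‖l‖ ≤ δ → ∀ n, n₀ ≤ n → ‖x₀ + l • e n‖ ≤ s) :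
    ∀ j, 1 ≤ j → ∀ n, n₀ ≤ n → iteratedFDeriv ℂ j f x₀ (fun _ => e n) = 0 := by
  intro j hj n hn
  set v := e n with hv
  -- the slice stays in the ball of radius s
  have hsl : ∀ l : ℂ, ‖l‖ < δ → ‖x₀ + l • v‖ ≤ s := fun l hl => hcond l hl.le n hn
  have hball1 : ∀ l : ℂ, ‖l‖ < δ → x₀ + l • v ∈ Metric.ball (0 : X) 1 := by
    intro l hl
    rw [Metric.mem_ball, dist_zero_right]
    exact lt_of_le_of_lt (hsl l hl) hs1
  -- f is bounded on the ball of radius s, so supOnBall is an upper bound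
  obtain ⟨C, hC⟩ := bound_of_uc f hf.2 hs1.le
  have hBdd : BddAbove ((fun x => ‖f x‖) '' Metric.closedBall (0 : X) s) := by
    refine ⟨C, fun a ha => ?_⟩
    rcases ha with ⟨x, hx, rfl⟩
    exact hC x hx
  have hub : ∀ x ∈ Metric.closedBall (0 : X) s, ‖f x‖ ≤ ‖f x₀‖ := by
    intro x hx
    rw [hatt]
    exact le_csSup hBdd ⟨x, hx, rfl⟩
  -- the slice function
  set g : ℂ → W := fun l => f (x₀ + l • v) with hg
  have hdg : DifferentiableOn ℂ g (Metric.ball (0 : ℂ) δ) := by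
    intro l hl
    rw [Metric.mem_ball, dist_zero_right] at hl
    have h1 : DifferentiableAt ℂ f (x₀ + l • v) :=
      hf.1.differentiableAt (Metric.isOpen_ball.mem_nhds (hball1 l hl))
    have h2 : DifferentiableAt ℂ (fun μ : ℂ => x₀ + μ • v) l :=
      (differentiableAt_id.smul_const v).const_add x₀
    exact (h1.comp l h2).differentiableWithinAt
  have hg0 : g 0 = f x₀ := by simp [hg]
  have hmax : IsMaxOn (norm ∘ g) (Metric.ball (0 : ℂ) δ) 0 := by
    intro l hl
    rw [Metric.mem_ball, dist_zero_right] at hl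
    simp only [Function.comp_apply, Set.mem_setOf_eq, hg0]
    exact hub _ (by rw [Metric.mem_closedBall, dist_zero_right]; exact hsl l hl)
  have heq : Set.EqOn g (Function.const ℂ (g 0)) (Metric.ball (0 : ℂ) δ) :=
    Complex.eqOn_of_isPreconnected_of_isMaxOn_norm (convex_ball (0 : ℂ) δ).isPreconnected
      Metric.isOpen_ball hdg (Metric.mem_ball_self hδ) hmax
  have hconst : ∀ l : ℂ, ‖l‖ < δ → f (x₀ + l • v) = f x₀ := by
    intro l hl
    have := heq (by rw [Metric.mem_ball, dist_zero_right]; exact hl)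
    simpa [hg0] using this
  -- main induction: all pure directional derivatives along v are constant on the slice
  have key : ∀ k : ℕ, ∀ l : ℂ, ‖l‖ < δ →
      iteratedFDeriv ℂ k f (x₀ + l • v) (fun _ => v) = if k = 0 then f x₀ else 0 := by
    intro k
    induction k with
    | zero =>
      intro l hl
      simp [iteratedFDeriv_zero_apply, hconst l hl]
    | succ k ih =>
      intro l hl
      have hstep : iteratedFDeriv ℂ (k + 1) f (x₀ + l • v) (fun _ => v) =
          (fderiv ℂ (iteratedFDeriv ℂ k f) (x₀ + l • v)) v (fun _ => v) := by
        rw [iteratedFDeriv_succ_apply_left]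
        rfl
      by_cases hd : DifferentiableAt ℂ (iteratedFDeriv ℂ k f) (x₀ + l • v)
      · set x := x₀ + l • v with hx
        set D := fderiv ℂ (iteratedFDeriv ℂ k f) x with hD
        -- derivative of μ ↦ x + μ • v at 0 is v
        have hu : HasDerivAt (fun μ : ℂ => x + μ • v) v 0 := by
          have h1 : HasDerivAt (fun μ : ℂ => μ • v) ((1 : ℂ) • v) 0 :=
            (hasDerivAt_id (0 : ℂ)).smul_const v
          rw [one_smul] at h1
          exact h1.const_add x
        have hd' : HasFDerivAt (iteratedFDeriv ℂ k f) D (x + (0 : ℂ) • v) := by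
          simpa using hd.hasFDerivAt
        have hcomp : HasDerivAt (fun μ : ℂ => iteratedFDeriv ℂ k f (x + μ • v)) (D v) 0 :=
          hd'.comp_hasDerivAt 0 hu
        have happ : HasDerivAt (fun μ : ℂ => iteratedFDeriv ℂ k f (x + μ • v) (fun _ => v))
            (D v (fun _ => v)) 0 := by
          have := (ContinuousMultilinearMap.apply ℂ (fun _ : Fin k => X) W
            (fun _ => v)).hasFDerivAt.comp_hasDerivAt 0 hcomp
          exact this
        -- the function is eventually constant near 0
        have hev : (fun μ : ℂ => iteratedFDeriv ℂ k f (x + μ • v) (fun _ => v)) =ᶠ[nhds 0]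
            (fun _ : ℂ => if k = 0 then f x₀ else 0) := by
          have hball : Metric.ball (0 : ℂ) (δ - ‖l‖) ∈ nhds (0 : ℂ) :=
            Metric.ball_mem_nhds _ (by linarith)
          filter_upwards [hball] with μ hμ
          rw [Metric.mem_ball, dist_zero_right] at hμ
          have hlu : ‖l + μ‖ < δ := by
            calc ‖l + μ‖ ≤ ‖l‖ + ‖μ‖ := norm_add_le l μ
            _ < δ := by linarith
          have hrw : x + μ • v = x₀ + (l + μ) • v := by
            rw [hx, add_smul]; abel
          rw [hrw]
          exact ih (l + μ) hlu
        have h0 : HasDerivAt (fun _ : ℂ => if k = 0 then f x₀ else 0) (D v (fun _ => v)) 0 :=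
          happ.congr_of_eventuallyEq hev.symm
        have hzero : D v (fun _ => v) = 0 :=
          h0.unique (hasDerivAt_const 0 _)
        rw [hstep, hzero]
        simp
      · rw [hstep, fderiv_zero_of_not_differentiableAt hd]
        simp
  have := key j 0 (by simpa using hδ)
  rw [show x₀ + (0 : ℂ) • v = x₀ by simp] at this
  rw [this, if_neg (by omega)]
end
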